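/- arXiv:2306.01585 — 4 statements merged into one kernel-verified Lean document; each statement's English description precedes it below -/
import Mathlib

section
/- Let p, q ≥ 2 and s ≤ −1 be integers, and let N = p + q. Let Q be the Gram matrix of the star-shaped plumbing graph consisting of a central vertex of weight −3, two chains of p − 1 and q − 1 vertices of weight −2 attached to the central vertex, and one additional vertex of weight s adjacent to the central vertex. If Q admits a lattice embedding into ℤ^N, then one of the following holds: (i) p = q = 2 and s = −λ² − (λ+1)² for some integer λ; (ii) q = 3 and s = −3λ² − p(2λ − 1)² for some integer λ; or (iii) p = 3 and s = −3λ² − q(2λ − 1)² for some integer λ. -/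
section Helpers

set_option maxHeartbeats 1000000

/-- integer dot product on `ℤ^N` -/
private def dotp {N : ℕ} (x y : Fin N → ℤ) : ℤ := ∑ m, x m * y m

private lemma dotp_comm {N : ℕ} (x y : Fin N → ℤ) : dotp x y = dotp y x := by
  unfold dotp; exact Finset.sum_congr rfl fun n _ => mul_comm _ _

/-- a vector supported on (at most) two coordinates -/
private def two_ite {N : ℕ} (a b : Fin N) (s t : ℤ) : Fin N → ℤ :=
  fun n => (if n = a then s else 0) + (if n = b then t else 0)

private lemma dotp_two_ite {N : ℕ} (a b : Fin N) (s t : ℤ) (w : Fin N → ℤ) :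
    dotp (two_ite a b s t) w = s * w a + t * w b := by
  unfold dotp two_ite
  simp [add_mul, Finset.sum_add_distrib, ite_mul, Finset.sum_ite_eq']

private lemma two_ite_left {N : ℕ} {a b : Fin N} (s t : ℤ) (h : a ≠ b) :
    two_ite a b s t a = s := by simp [two_ite, h]

private lemma two_ite_right {N : ℕ} {a b : Fin N} (s t : ℤ) (h : a ≠ b) :
    two_ite a b s t b = t := by simp [two_ite, Ne.symm h]

private lemma two_ite_ne {N : ℕ} {a b n : Fin N} (s t : ℤ) (h1 : n ≠ a) (h2 : n ≠ b) :
    two_ite a b s t n = 0 := by simp [two_ite, h1, h2]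

private lemma two_ite_support {N : ℕ} {a b n : Fin N} {s t : ℤ}
    (h : two_ite a b s t n ≠ 0) : n = a ∨ n = b := by
  by_contra hc
  push_neg at hc
  exact h (two_ite_ne s t hc.1 hc.2)

private lemma sgn_sq {σ : ℤ} (hσ : σ = 1 ∨ σ = -1) : σ * σ = 1 := by
  rcases hσ with h|h <;> rw [h] <;> ring

private lemma sgn_inv {σ a v : ℤ} (hσ : σ = 1 ∨ σ = -1) (h : σ * a = v) : a = σ * v := by
  have h2 := sgn_sq hσ
  calc a = (σ * σ) * a := by rw [h2]; ring
  _ = σ * (σ * a) := by ring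
  _ = σ * v := by rw [h]

private lemma mul_from_twist {σ a b va vb : ℤ} (hσ : σ = 1 ∨ σ = -1)
    (ha : σ * a = va) (hb : σ * b = vb) : a * b = va * vb := by
  have h2 := sgn_sq hσ
  calc a * b = (σ * σ) * (a * b) := by rw [h2]; ring
  _ = (σ * a) * (σ * b) := by ring
  _ = va * vb := by rw [ha, hb]

private lemma one_le_sq {u : ℤ} (h : u ≠ 0) : 1 ≤ u * u := by
  rcases h.lt_or_gt with h'|h' <;> nlinarith

private lemma sq_pm_one {u v : ℤ} (h : u * u + v * v = 2) :
    (u = 1 ∨ u = -1) ∧ (v = 1 ∨ v = -1) := by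
  have h1 : u ≤ 1 := by nlinarith
  have h2 : -1 ≤ u := by nlinarith
  have h3 : v ≤ 1 := by nlinarith
  have h4 : -1 ≤ v := by nlinarith
  interval_cases u <;> interval_cases v <;> omega

private lemma sum_one_decomp {N : ℕ} (T : Finset (Fin N)) (x : Fin N → ℤ)
    (h : ∑ n ∈ T, x n * x n = 1) :
    ∃ w ∈ T, (x w = 1 ∨ x w = -1) ∧ ∀ n ∈ T, n ≠ w → x n = 0 := by
  classical
  set S := T.filter (fun n => x n ≠ 0) with hS
  have hsub : S ⊆ T := Finset.filter_subset _ _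
  have hEq : ∑ n ∈ S, x n * x n = 1 := by
    rw [hS, Finset.sum_filter_of_ne]
    · exact h
    · intro n _ hne h0; exact hne (by rw [h0]; ring)
  have hbound : ∀ n ∈ S, 1 ≤ x n * x n := fun n hn =>
    one_le_sq (Finset.mem_filter.mp hn).2
  have hcard : S.card ≤ 1 := by
    by_contra hc
    push_neg at hc
    have : 2 ≤ ∑ n ∈ S, x n * x n := by
      calc (2 : ℤ) ≤ S.card := by exact_mod_cast hc
      _ = ∑ _n ∈ S, (1:ℤ) := by simp
      _ ≤ ∑ n ∈ S, x n * x n := Finset.sum_le_sum hbound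
    omega
  have hne : S.Nonempty := by
    by_contra hc
    rw [Finset.not_nonempty_iff_eq_empty] at hc
    rw [hc] at hEq; simp at hEq
  obtain ⟨w, hw⟩ := hne
  have honly : ∀ n ∈ T, n ≠ w → x n = 0 := by
    intro n hn hnw
    by_contra h0
    have hnS : n ∈ S := Finset.mem_filter.mpr ⟨hn, h0⟩
    have : 2 ≤ S.card := Finset.one_lt_card.mpr ⟨n, hnS, w, hw, hnw⟩
    omega
  refine ⟨w, hsub hw, ?_, honly⟩
  have hSw : S = {w} := by
    apply Finset.eq_singleton_iff_unique_mem.mpr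
    refine ⟨hw, fun y hy => ?_⟩
    by_contra hne'
    have : 2 ≤ S.card := Finset.one_lt_card.mpr ⟨y, hy, w, hw, hne'⟩
    omega
  rw [hSw, Finset.sum_singleton] at hEq
  have h1 : x w ≤ 1 := by nlinarith
  have h2 : -1 ≤ x w := by nlinarith
  interval_cases (x w) <;> omega

private lemma norm_two_decomp {N : ℕ} (x : Fin N → ℤ) (h : dotp x x = 2) :
    ∃ a b s t, a ≠ b ∧ (s = 1 ∨ s = -1) ∧ (t = 1 ∨ t = -1) ∧ x = two_ite a b s t := by
  classical
  set S := Finset.univ.filter (fun n => x n ≠ 0) with hS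
  have hEq : ∑ n ∈ S, x n * x n = 2 := by
    rw [hS, Finset.sum_filter_of_ne]
    · exact h
    · intro n _ hne h0; exact hne (by rw [h0]; ring)
  have hbound : ∀ n ∈ S, 1 ≤ x n * x n := fun n hn =>
    one_le_sq (Finset.mem_filter.mp hn).2
  have hub : ∀ n ∈ S, x n * x n ≤ 2 := by
    intro n hn
    have h2 := Finset.single_le_sum (f := fun n => x n * x n)
      (fun i _ => mul_self_nonneg (x i)) hn
    omega
  have hval : ∀ n ∈ S, x n * x n = 1 := by
    intro n hn
    have h1 := hbound n hn
    have h2 := hub n hn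
    have h3 : x n ≤ 1 := by nlinarith
    have h4 : -1 ≤ x n := by nlinarith
    interval_cases (x n) <;> omega
  have hcardsum : (S.card : ℤ) = 2 := by
    have : ∑ n ∈ S, x n * x n = (S.card : ℤ) := by
      rw [Finset.sum_congr rfl hval]; simp
    omega
  have hcard : S.card = 2 := by exact_mod_cast hcardsum
  obtain ⟨a, b, hab, hSab⟩ := Finset.card_eq_two.mp hcard
  have hxa : x a = 1 ∨ x a = -1 := by
    have h1 := hval a (by rw [hSab]; simp)
    have h3 : x a ≤ 1 := by nlinarith
    have h4 : -1 ≤ x a := by nlinarith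
    interval_cases (x a) <;> omega
  have hxb : x b = 1 ∨ x b = -1 := by
    have h1 := hval b (by rw [hSab]; simp)
    have h3 : x b ≤ 1 := by nlinarith
    have h4 : -1 ≤ x b := by nlinarith
    interval_cases (x b) <;> omega
  refine ⟨a, b, x a, x b, hab, hxa, hxb, ?_⟩
  funext n
  unfold two_ite
  by_cases hna : n = a
  · subst hna; simp [hab]
  · by_cases hnb : n = b
    · subst hnb; simp [hna]
    · have : n ∉ S := by rw [hSab]; simp [hna, hnb]
      have h0 : x n = 0 := by
        by_contra h0
        exact this (Finset.mem_filter.mpr ⟨Finset.mem_univ n, h0⟩)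
      simp [hna, hnb, h0]

private lemma chain_extend {N : ℕ} (m t : ℕ) (x : ℕ → Fin N → ℤ)
    (hxx : ∀ j, j < m → dotp (x j) (x j) = 2)
    (hadj : ∀ j, j + 1 < m → dotp (x j) (x (j+1)) = -1)
    (hfar : ∀ j k, j + 2 ≤ k → k < m → dotp (x j) (x k) = 0)
    (ht1 : 1 ≤ t) (htm : t < m)
    (y : ℕ → Fin N) (σ : ℕ → ℤ)
    (hinj : ∀ i, i ≤ t → ∀ j, j ≤ t → y i = y j → i = j)
    (hsgn : ∀ i, i ≤ t → σ i = 1 ∨ σ i = -1)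
    (hform : ∀ j, j < t → x j = two_ite (y j) (y (j+1)) (σ j) (-σ (j+1)))
    (hu0 : σ 0 * x t (y 0) = 0) :
    ∃ (y' : ℕ → Fin N) (σ' : ℕ → ℤ),
      (∀ i, i ≤ t+1 → ∀ j, j ≤ t+1 → y' i = y' j → i = j) ∧
      (∀ i, i ≤ t+1 → σ' i = 1 ∨ σ' i = -1) ∧
      (∀ j, j < t+1 → x j = two_ite (y' j) (y' (j+1)) (σ' j) (-σ' (j+1))) := by
  classical
  obtain ⟨t', rfl⟩ : ∃ t', t = t' + 1 := ⟨t - 1, by omega⟩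
  set X := x (t' + 1) with hX
  have hu : ∀ j, j < t' + 1 → σ j * X (y j) = 0 := by
    intro j
    induction j with
    | zero => intro _; exact hu0
    | succ j ih =>
      intro hj
      have hd := hfar j (t'+1) (by omega) htm
      rw [hform j (by omega), dotp_two_ite] at hd
      have := ih (by omega)
      linarith
  have hXy : ∀ j, j < t' + 1 → X (y j) = 0 := by
    intro j hj
    have h1 := hu j hj
    rcases hsgn j (by omega) with h|h <;> rw [h] at h1 <;> linarith
  have hlast : σ (t'+1) * X (y (t'+1)) = 1 := by
    have hd := hadj t' (by omega)
    rw [hform t' (by omega), dotp_two_ite] at hd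
    have h0 := hXy t' (by omega)
    rw [← hX] at hd
    rw [h0] at hd
    linarith
  have hXyt : X (y (t'+1)) = σ (t'+1) := by
    rcases hsgn (t'+1) le_rfl with h|h <;> rw [h] at hlast ⊢ <;> linarith
  set Yt := (Finset.range (t'+2)).image y with hYt
  have hsumYt : ∑ n ∈ Yt, X n * X n = 1 := by
    rw [hYt, Finset.sum_image (by
      intro i hi j hj hij
      exact hinj i (by simp at hi; omega) j (by simp at hj; omega) hij)]
    rw [Finset.sum_range_succ]
    have h0 : ∑ j ∈ Finset.range (t'+1), X (y j) * X (y j) = 0 :=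
      Finset.sum_eq_zero fun j hj => by
        rw [hXy j (Finset.mem_range.mp hj)]; ring
    rw [h0, hXyt]
    rcases hsgn (t'+1) le_rfl with h|h <;> rw [h] <;> ring
  have htot : ∑ n ∈ Finset.univ, X n * X n = 2 := hxx (t'+1) htm
  have hoff : ∑ n ∈ Finset.univ \ Yt, X n * X n = 1 := by
    have hsd := Finset.sum_sdiff (f := fun n => X n * X n) (Finset.subset_univ Yt)
    linarith [hsd]
  obtain ⟨w, hwmem, hwpm, hwzero⟩ := sum_one_decomp _ _ hoff
  have hwnot : ∀ j, j ≤ t' + 1 → w ≠ y j := by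
    intro j hj heq
    rw [Finset.mem_sdiff] at hwmem
    exact hwmem.2 (by rw [hYt]; exact Finset.mem_image.mpr ⟨j, Finset.mem_range.mpr (by omega), heq.symm⟩)
  refine ⟨fun i => if i = t'+2 then w else y i, fun i => if i = t'+2 then -X w else σ i,
    ?_, ?_, ?_⟩
  · intro i hi j hj heq
    simp only [] at heq
    by_cases hi2 : i = t'+2 <;> by_cases hj2 : j = t'+2
    · omega
    · rw [if_pos hi2, if_neg hj2] at heq
      exact absurd heq (hwnot j (by omega))
    · rw [if_neg hi2, if_pos hj2] at heq
      exact absurd heq.symm (hwnot i (by omega))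
    · rw [if_neg hi2, if_neg hj2] at heq
      exact hinj i (by omega) j (by omega) heq
  · intro i hi
    simp only []
    by_cases hi2 : i = t'+2
    · rw [if_pos hi2]; omega
    · rw [if_neg hi2]; exact hsgn i (by omega)
  · intro j hj
    simp only []
    by_cases hjt : j < t' + 1
    · have e1 : (if j = t'+2 then w else y j) = y j := if_neg (by omega)
      have e2 : (if j+1 = t'+2 then w else y (j+1)) = y (j+1) := if_neg (by omega)
      have e3 : (if j = t'+2 then -X w else σ j) = σ j := if_neg (by omega)
      have e4 : (if j+1 = t'+2 then -X w else σ (j+1)) = σ (j+1) := if_neg (by omega)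
      rw [e1, e2, e3, e4]
      exact hform j hjt
    · have hjeq : j = t' + 1 := by omega
      subst hjeq
      have e1 : (if t'+1 = t'+2 then w else y (t'+1)) = y (t'+1) := if_neg (by omega)
      have e2 : (if t'+1+1 = t'+2 then w else y (t'+1+1)) = w := if_pos rfl
      have e3 : (if t'+1 = t'+2 then -X w else σ (t'+1)) = σ (t'+1) := if_neg (by omega)
      have e4 : (if t'+1+1 = t'+2 then -X w else σ (t'+1+1)) = -X w := if_pos rfl
      rw [e1, e2, e3, e4]
      rw [← hX]
      funext n
      unfold two_ite
      by_cases hn1 : n = y (t'+1)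
      · subst hn1
        rw [if_pos rfl, if_neg (fun hh => hwnot (t'+1) le_rfl hh.symm), hXyt]
        ring
      · by_cases hn2 : n = w
        · subst hn2
          rw [if_neg hn1, if_pos rfl]
          ring
        · rw [if_neg hn1, if_neg hn2]
          by_cases hnY : n ∈ Yt
          · rw [hYt] at hnY
            obtain ⟨j', hj', hjn⟩ := Finset.mem_image.mp hnY
            rw [Finset.mem_range] at hj'
            have hj'lt : j' < t' + 1 := by
              rcases Nat.lt_or_ge j' (t'+1) with h|h
              · exact h
              · exfalso; have : j' = t' + 1 := by omega
                rw [this] at hjn; exact hn1 hjn.symm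
            rw [← hjn]
            rw [hXy j' hj'lt]
            ring
          · rw [hwzero n (Finset.mem_sdiff.mpr ⟨Finset.mem_univ n, hnY⟩) hn2]
            ring

private lemma chain_struct {N : ℕ} (m : ℕ) (hm : 1 ≤ m) (x : ℕ → Fin N → ℤ) (c : Fin N → ℤ)
    (hxx : ∀ j, j < m → dotp (x j) (x j) = 2)
    (hadj : ∀ j, j + 1 < m → dotp (x j) (x (j+1)) = -1)
    (hfar : ∀ j k, j + 2 ≤ k → k < m → dotp (x j) (x k) = 0)
    (hc0 : ∀ j, j + 1 < m → dotp c (x j) = 0)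
    (hc1 : dotp c (x (m-1)) = -1) :
    ∃ (y : ℕ → Fin N) (σ : ℕ → ℤ),
      (∀ i, i ≤ m → ∀ j, j ≤ m → y i = y j → i = j) ∧
      (∀ i, i ≤ m → σ i = 1 ∨ σ i = -1) ∧
      (∀ j, j < m → x j = two_ite (y j) (y (j+1)) (σ j) (-σ (j+1))) := by
  classical
  set Pred : ℕ → Prop := fun t =>
    ∃ (y : ℕ → Fin N) (σ : ℕ → ℤ),
      (∀ i, i ≤ t → ∀ j, j ≤ t → y i = y j → i = j) ∧
      (∀ i, i ≤ t → σ i = 1 ∨ σ i = -1) ∧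
      (∀ j, j < t → x j = two_ite (y j) (y (j+1)) (σ j) (-σ (j+1))) with hPred
  have base : Pred 1 := by
    obtain ⟨a, b, s0, t0, hab, hs0, ht0, hx0⟩ := norm_two_decomp (x 0) (hxx 0 (by omega))
    refine ⟨fun i => if i = 0 then a else b, fun i => if i = 0 then s0 else -t0, ?_, ?_, ?_⟩
    · intro i hi j hj heq
      simp only [] at heq
      interval_cases i <;> interval_cases j <;> simp_all
    · intro i hi
      simp only []
      by_cases hi0 : i = 0
      · rw [if_pos hi0]; exact hs0
      · rw [if_neg hi0]; omega
    · intro j hj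
      have hj0 : j = 0 := by omega
      subst hj0
      norm_num [hx0]
  have step : ∀ t, 1 ≤ t → t < m → Pred t → Pred (t+1) := by
    intro t ht1 htm hPt
    obtain ⟨y, σ, hinj, hsgn, hform⟩ := hPt
    obtain ⟨t', rfl⟩ : ∃ t', t = t' + 1 := ⟨t - 1, by omega⟩
    set X := x (t' + 1) with hXdef
    set u : ℕ → ℤ := fun j => σ j * X (y j) with hu
    have hσsq : ∀ i, i ≤ t'+1 → σ i * σ i = 1 := by
      intro i hi; rcases hsgn i hi with h|h <;> rw [h] <;> ring
    have huch : ∀ j, j < t' + 1 → u j = u 0 := by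
      intro j
      induction j with
      | zero => intro _; rfl
      | succ j ih =>
        intro hj
        have hd := hfar j (t'+1) (by omega) htm
        rw [hform j (by omega), dotp_two_ite] at hd
        have h2 := ih (by omega)
        simp only [hu] at h2 ⊢
        rw [← hXdef] at hd
        linarith
    have hut : u (t'+1) = u 0 + 1 := by
      have hd := hadj t' (by omega)
      rw [hform t' (by omega), dotp_two_ite] at hd
      rw [← hXdef] at hd
      have h2 := huch t' (by omega)
      simp only [hu] at h2 ⊢
      linarith
    have hXsq : ∀ j, j ≤ t'+1 → X (y j) * X (y j) = u j * u j := by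
      intro j hj
      have h1 := hσsq j hj
      simp only [hu]
      nlinarith [hσsq j hj]
    have hinjR : ∀ i ∈ Finset.range (t'+2), ∀ j ∈ Finset.range (t'+2), y i = y j → i = j := by
      intro i hi j hj hij
      exact hinj i (by simp at hi; omega) j (by simp at hj; omega) hij
    have himgsum : ∑ n ∈ (Finset.range (t'+2)).image y, X n * X n
        = ∑ j ∈ Finset.range (t'+2), X (y j) * X (y j) := Finset.sum_image hinjR
    have hble : ∑ j ∈ Finset.range (t'+2), X (y j) * X (y j) ≤ 2 := by
      rw [← himgsum]
      have h1 : ∑ n ∈ (Finset.range (t'+2)).image y, X n * X n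
          ≤ ∑ n ∈ Finset.univ, X n * X n := by
        apply Finset.sum_le_sum_of_subset_of_nonneg (Finset.subset_univ _)
        intro n _ _; exact mul_self_nonneg _
      have h2 : ∑ n ∈ Finset.univ, X n * X n = 2 := hxx (t'+1) htm
      omega
    have hsum2 : ∑ j ∈ Finset.range (t'+2), X (y j) * X (y j)
        = (t'+1 : ℤ) * (u 0 * u 0) + (u 0 + 1) * (u 0 + 1) := by
      rw [Finset.sum_range_succ]
      have h1 : ∑ j ∈ Finset.range (t'+1), X (y j) * X (y j)
          = ∑ _j ∈ Finset.range (t'+1), u 0 * u 0 := by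
        apply Finset.sum_congr rfl
        intro j hj
        rw [Finset.mem_range] at hj
        rw [hXsq j (by omega), huch j hj]
      rw [h1, Finset.sum_const, nsmul_eq_mul, Finset.card_range, hXsq (t'+1) le_rfl, hut]
      push_cast
      ring
    have hkey : (t'+1 : ℤ) * (u 0 * u 0) + (u 0 + 1) * (u 0 + 1) ≤ 2 := by
      rw [← hsum2]; exact hble
    have ht'nn : (0:ℤ) ≤ (t' : ℤ) := by positivity
    have h01 : u 0 = 0 ∨ u 0 = -1 := by
      have hb2 : u 0 * u 0 + (u 0 + 1) * (u 0 + 1) ≤ 2 := by nlinarith [mul_self_nonneg (u 0)]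
      have hle : u 0 ≤ 0 := by nlinarith
      have hge : -1 ≤ u 0 := by nlinarith
      omega
    rcases h01 with h00 | h0m
    · have hu0' : σ 0 * x (t'+1) (y 0) = 0 := by
        have := h00; simp only [hu] at this; exact this
      exact chain_extend m (t'+1) x hxx hadj hfar (by omega) htm y σ hinj hsgn hform hu0'
    · by_cases ht'0 : t' = 0
      · subst ht'0
        have hne01 : y 0 ≠ y 1 := fun e => by
          have := hinj 0 (by omega) 1 (by omega) e; omega
        have hu1 : σ 1 * X (y 1) = 0 := by
          have h2 := hut; rw [h0m] at h2; simp only [hu] at h2; linarith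
        clear hsum2 hble himgsum hinjR hXsq hkey hσsq huch hut base hPred h0m ht'nn
        refine chain_extend m 1 x hxx hadj hfar (by omega) htm
          (fun i => if i = 0 then y 1 else if i = 1 then y 0 else y i)
          (fun i => if i = 0 then -σ 1 else if i = 1 then -σ 0 else σ i) ?_ ?_ ?_ ?_
        · intro i hi j hj heq
          interval_cases i <;> interval_cases j
          · rfl
          · exfalso; norm_num at heq; exact hne01 heq.symm
          · exfalso; norm_num at heq; exact hne01 heq
          · rfl
        · intro i hi
          interval_cases i
          · rcases hsgn 1 (by omega) with h|h <;> simp [h]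
          · rcases hsgn 0 (by omega) with h|h <;> simp [h]
        · intro j hj
          have hj0 : j = 0 := by omega
          subst hj0
          norm_num
          rw [hform 0 (by omega)]
          funext n
          simp only [two_ite]
          ring
        · norm_num
          have h5 : σ 1 * x 1 (y 1) = 0 := hu1
          exact mul_eq_zero.mp h5
      · exfalso
        have ht'1 : t' = 1 := by
          have h2 : ((t':ℤ)+1) * 1 + 0 ≤ 2 := by nlinarith [hkey]
          have : (t' : ℤ) ≤ 1 := by linarith
          omega
        subst ht'1
        rw [show Finset.range (1+2) = Finset.range 3 from by norm_num] at himgsum hsum2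
        have hu0' : σ 0 * X (y 0) = -1 := by
          have := h0m; simp only [hu] at this; exact this
        have hu1' : σ 1 * X (y 1) = -1 := by
          have h2 := huch 1 (by omega); rw [h0m] at h2; simp only [hu] at h2; exact h2
        have hu2' : σ 2 * X (y 2) = 0 := by
          have h2 := hut; rw [h0m] at h2; simp only [hu] at h2; simpa using h2
        have hXy0 : X (y 0) = -σ 0 := by
          rcases hsgn 0 (by omega) with h|h <;> rw [h] at hu0' ⊢ <;> linarith
        have hXy1 : X (y 1) = -σ 1 := by
          rcases hsgn 1 (by omega) with h|h <;> rw [h] at hu1' ⊢ <;> linarith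
        have hXy2 : X (y 2) = 0 := by
          rcases hsgn 2 (by omega) with h|h <;> rw [h] at hu2' <;> linarith
        have hoff : ∑ n ∈ Finset.univ \ (Finset.range 3).image y, X n * X n = 0 := by
          have hsd := Finset.sum_sdiff (f := fun n => X n * X n)
            (Finset.subset_univ ((Finset.range 3).image y))
          have h2 : ∑ n ∈ Finset.univ, X n * X n = 2 := hxx 2 (by omega)
          have h3 : ∑ n ∈ (Finset.range 3).image y, X n * X n = 2 := by
            rw [himgsum, hsum2, h0m]
            norm_num
          linarith
        have hzero : ∀ n ∈ Finset.univ \ (Finset.range 3).image y, X n = 0 := by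
          intro n hn
          have := (Finset.sum_eq_zero_iff_of_nonneg
            (fun i _ => mul_self_nonneg (X i))).mp hoff n hn
          nlinarith [this]
        have hne01 : y 0 ≠ y 1 := fun e => by
          have := hinj 0 (by omega) 1 (by omega) e; omega
        have hne02 : y 0 ≠ y 2 := fun e => by
          have := hinj 0 (by omega) 2 (by omega) e; omega
        have hne12 : y 1 ≠ y 2 := fun e => by
          have := hinj 1 (by omega) 2 (by omega) e; omega
        have hx2 : x 2 = two_ite (y 0) (y 1) (-σ 0) (-σ 1) := by
          rw [show x 2 = X from rfl]
          funext n
          simp only [two_ite]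
          by_cases hn0 : n = y 0
          · subst hn0; rw [if_pos rfl, if_neg hne01, hXy0]; ring
          · by_cases hn1 : n = y 1
            · subst hn1; rw [if_neg (Ne.symm hne01), if_pos rfl, hXy1]; ring
            · rw [if_neg hn0, if_neg hn1]
              by_cases hn2 : n = y 2
              · subst hn2; rw [hXy2]; ring
              · have hnmem : n ∈ Finset.univ \ (Finset.range 3).image y := by
                  rw [Finset.mem_sdiff]
                  refine ⟨Finset.mem_univ n, fun hc => ?_⟩
                  obtain ⟨j', hj', hjn⟩ := Finset.mem_image.mp hc
                  rw [Finset.mem_range] at hj'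
                  interval_cases j'
                  · exact hn0 hjn.symm
                  · exact hn1 hjn.symm
                  · exact hn2 hjn.symm
                rw [hzero n hnmem]; ring
        obtain ⟨A, hA⟩ : ∃ A : ℤ, A = σ 0 * (if 3 < m then x 3 else c) (y 0) := ⟨_, rfl⟩
        obtain ⟨B, hB⟩ : ∃ B : ℤ, B = σ 1 * (if 3 < m then x 3 else c) (y 1) := ⟨_, rfl⟩
        by_cases h3m : 3 < m
        · rw [if_pos h3m] at hA hB
          have hfa := hfar 0 3 (by omega) h3m
          rw [hform 0 (by omega), dotp_two_ite] at hfa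
          have hab : A = B := by rw [hA, hB]; linarith
          have hadj23 := hadj 2 (by omega)
          rw [hx2, dotp_two_ite] at hadj23
          have hsum : A + B = 1 := by rw [hA, hB]; linarith
          omega
        · have hm3 : m = 3 := by omega
          rw [if_neg h3m] at hA hB
          have hfa := hc0 0 (by omega)
          rw [dotp_comm, hform 0 (by omega), dotp_two_ite] at hfa
          have hab : A = B := by rw [hA, hB]; linarith
          have hcl := hc1
          rw [hm3] at hcl
          norm_num at hcl
          rw [dotp_comm, hx2, dotp_two_ite] at hcl
          have hsum : A + B = 1 := by rw [hA, hB]; linarith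
          omega
  have main : ∀ t, 1 ≤ t → t ≤ m → Pred t := by
    intro t
    induction t with
    | zero => intro h; omega
    | succ t ih =>
      intro _ htm
      by_cases ht0 : t = 0
      · subst ht0; exact base
      · exact step t (by omega) (by omega) (ih (by omega) (by omega))
  exact main m hm le_rfl

private lemma orth_chain {N : ℕ} (m : ℕ) (x : ℕ → Fin N → ℤ) (y : ℕ → Fin N) (σ : ℕ → ℤ)
    (hform : ∀ j, j < m → x j = two_ite (y j) (y (j+1)) (σ j) (-σ (j+1)))
    (w : Fin N → ℤ) (hw : ∀ j, j < m → dotp (x j) w = 0) :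
    ∀ j, j ≤ m → σ j * w (y j) = σ 0 * w (y 0) := by
  intro j
  induction j with
  | zero => intro _; rfl
  | succ j ih =>
    intro hj
    have hd := hw j (by omega)
    rw [hform j (by omega), dotp_two_ite] at hd
    have := ih (by omega)
    linarith

private lemma attach_vals {N : ℕ} (m : ℕ) (hm : 1 ≤ m) (x : ℕ → Fin N → ℤ)
    (y : ℕ → Fin N) (σ : ℕ → ℤ)
    (hform : ∀ j, j < m → x j = two_ite (y j) (y (j+1)) (σ j) (-σ (j+1)))
    (c : Fin N → ℤ) (hc0 : ∀ j, j + 1 < m → dotp (x j) c = 0)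
    (hc1 : dotp (x (m-1)) c = -1) :
    (∀ j, j ≤ m - 1 → σ j * c (y j) = σ 0 * c (y 0)) ∧
      σ m * c (y m) = σ 0 * c (y 0) + 1 := by
  have h1 : ∀ j, j ≤ m - 1 → σ j * c (y j) = σ 0 * c (y 0) := by
    intro j
    induction j with
    | zero => intro _; rfl
    | succ j ih =>
      intro hj
      have hd := hc0 j (by omega)
      rw [hform j (by omega), dotp_two_ite] at hd
      have := ih (by omega)
      linarith
  refine ⟨h1, ?_⟩
  obtain ⟨m', rfl⟩ : ∃ m', m = m' + 1 := ⟨m - 1, by omega⟩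
  have hd := hc1
  simp only [Nat.add_sub_cancel] at hd
  rw [hform m' (by omega), dotp_two_ite] at hd
  have := h1 m' (by omega)
  linarith

private lemma split_univ_sum {N p q : ℕ} (hN : p + q = N) (y z : ℕ → Fin N)
    (hy : ∀ i, i < p → ∀ j, j < p → y i = y j → i = j)
    (hz : ∀ i, i < q → ∀ j, j < q → z i = z j → i = j)
    (hdisj : ∀ i, i < p → ∀ j, j < q → y i ≠ z j)
    (f : Fin N → ℤ) :
    ∑ n, f n = ∑ j ∈ Finset.range p, f (y j) + ∑ k ∈ Finset.range q, f (z k) := by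
  classical
  set YS := (Finset.range p).image y with hYS
  set ZS := (Finset.range q).image z with hZS
  have hcy : YS.card = p := by
    rw [hYS, Finset.card_image_of_injOn, Finset.card_range]
    intro i hi j hj hij
    exact hy i (Finset.mem_range.mp hi) j (Finset.mem_range.mp hj) hij
  have hcz : ZS.card = q := by
    rw [hZS, Finset.card_image_of_injOn, Finset.card_range]
    intro i hi j hj hij
    exact hz i (Finset.mem_range.mp hi) j (Finset.mem_range.mp hj) hij
  have hdis : Disjoint YS ZS := by
    rw [Finset.disjoint_left]
    intro n hnY hnZ
    obtain ⟨i, hi, hin⟩ := Finset.mem_image.mp hnY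
    obtain ⟨j, hj, hjn⟩ := Finset.mem_image.mp hnZ
    exact hdisj i (Finset.mem_range.mp hi) j (Finset.mem_range.mp hj) (by rw [hin, hjn])
  have huniv : YS ∪ ZS = Finset.univ := by
    apply Finset.eq_univ_of_card
    rw [Finset.card_union_of_disjoint hdis, hcy, hcz, hN, Fintype.card_fin]
  rw [← huniv, Finset.sum_union hdis]
  congr 1
  · rw [hYS, Finset.sum_image]
    intro i hi j hj hij
    exact hy i (Finset.mem_range.mp hi) j (Finset.mem_range.mp hj) hij
  · rw [hZS, Finset.sum_image]
    intro i hi j hj hij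
    exact hz i (Finset.mem_range.mp hi) j (Finset.mem_range.mp hj) hij

private lemma solve_gd {Pc Rc g d : ℤ} (hP : 1 ≤ Pc) (hR : 1 ≤ Rc)
    (E1 : Pc * (g*g) + (g+1)*(g+1) + (Rc * (d*d) + (d+1)*(d+1)) = 3) :
    (g = 0 ∨ g = -1) ∧ (d = 0 ∨ d = -1) := by
  have t1 : (0:ℤ) ≤ Pc * (g*g) := mul_nonneg (by linarith) (mul_self_nonneg g)
  have t2 : (0:ℤ) ≤ Rc * (d*d) := mul_nonneg (by linarith) (mul_self_nonneg d)
  constructor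
  · have hb1 : (g+1)*(g+1) ≤ 3 := by nlinarith [mul_self_nonneg (d+1)]
    have hb2 : g*g ≤ 3 := by
      nlinarith [mul_self_nonneg (d+1), mul_self_nonneg (g+1), mul_self_nonneg g]
    have c1 : g + 1 ≤ 1 := by nlinarith
    have c2 : -1 ≤ g + 1 := by nlinarith
    have c3 : -1 ≤ g := by nlinarith [sq_nonneg (g + 2)]
    omega
  · have hb1 : (d+1)*(d+1) ≤ 3 := by nlinarith [mul_self_nonneg (g+1)]
    have hb2 : d*d ≤ 3 := by
      nlinarith [mul_self_nonneg (g+1), mul_self_nonneg (d+1), mul_self_nonneg d]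
    have c1 : d + 1 ≤ 1 := by nlinarith
    have c2 : -1 ≤ d + 1 := by nlinarith
    have c3 : -1 ≤ d := by nlinarith [sq_nonneg (d + 2)]
    omega

private lemma sum_range_const_last {P : ℕ} (hP : 1 ≤ P) (g : ℕ → ℤ) (a b : ℤ)
    (h1 : ∀ j, j ≤ P - 1 → g j = a) (h2 : g P = b) :
    ∑ j ∈ Finset.range (P+1), g j = (P : ℤ) * a + b := by
  rw [Finset.sum_range_succ, h2]
  congr 1
  rw [Finset.sum_congr rfl (fun j hj => h1 j (by rw [Finset.mem_range] at hj; omega)),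
    Finset.sum_const, nsmul_eq_mul, Finset.card_range]

end Helpers

set_option maxHeartbeats 1600000


/-- The Gram matrix of a star-shaped plumbing graph: a central vertex of weight
`w0`; for each `i : ι` a chain of `L i` vertices of weight `−2` whose last
vertex is adjacent to the central vertex; and for each `a : κ` an extra vertex
of weight `w a` adjacent to the central vertex. Diagonal entries are the
weights, entries at adjacent pairs of vertices are 1, all other entries are 0. -/
def starGram {ι κ : Type} [DecidableEq ι] [DecidableEq κ]
    (w0 : ℤ) (L : ι → ℕ) (w : κ → ℤ) :
    Matrix (Unit ⊕ ((Σ i : ι, Fin (L i)) ⊕ κ)) (Unit ⊕ ((Σ i : ι, Fin (L i)) ⊕ κ)) ℤ :=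
  fun u v =>
    match u, v with
    | Sum.inl _, Sum.inl _ => w0
    | Sum.inl _, Sum.inr (Sum.inl ⟨i, j⟩) => if (j : ℕ) + 1 = L i then 1 else 0
    | Sum.inl _, Sum.inr (Sum.inr _) => 1
    | Sum.inr (Sum.inl ⟨i, j⟩), Sum.inl _ => if (j : ℕ) + 1 = L i then 1 else 0
    | Sum.inr (Sum.inr _), Sum.inl _ => 1
    | Sum.inr (Sum.inl ⟨i, j⟩), Sum.inr (Sum.inl ⟨i', j'⟩) =>
        if i = i' then
          if (j : ℕ) = (j' : ℕ) then -2
          else if (j : ℕ) + 1 = (j' : ℕ) ∨ (j' : ℕ) + 1 = (j : ℕ) then 1 else 0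
        else 0
    | Sum.inr (Sum.inl _), Sum.inr (Sum.inr _) => 0
    | Sum.inr (Sum.inr _), Sum.inr (Sum.inl _) => 0
    | Sum.inr (Sum.inr a), Sum.inr (Sum.inr b) => if a = b then w a else 0

/-- A lattice embedding of the Gram matrix `Q` into `ℤ^N`: a ℤ-linear map
`φ : ℤ^V → ℤ^N` with `⟨φ(x), φ(y)⟩ = −xᵀQy` for all `x, y`. -/
def IsLatticeEmbedding {V : Type} [Fintype V] (Q : Matrix V V ℤ) (N : ℕ)
    (φ : (V → ℤ) →ₗ[ℤ] (Fin N → ℤ)) : Prop :=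
  ∀ x y : V → ℤ, (∑ m, φ x m * φ y m) = -(∑ a, ∑ b, x a * Q a b * y b)

/-- The support of the `φ`-image of the `i`-th chain: the union of the supports
of `φ` applied to the standard basis vectors corresponding to its vertices. -/
def chainSupport {ι κ : Type} [DecidableEq ι] [DecidableEq κ]
    {L : ι → ℕ} {N : ℕ}
    (φ : ((Unit ⊕ ((Σ i : ι, Fin (L i)) ⊕ κ)) → ℤ) →ₗ[ℤ] (Fin N → ℤ)) (i : ι) :
    Set (Fin N) :=
  ⋃ j : Fin (L i), Function.support (φ (Pi.single (Sum.inr (Sum.inl ⟨i, j⟩)) 1))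

/-- If the plumbing `X(p, q, 1, s)` with `p, q ≥ 2` and `s ≤ −1` (central
vertex of weight `−3`, chains of lengths `p−1` and `q−1`, and a vertex of
weight `s`) admits a lattice embedding into `ℤ^(p+q)`, then `p = q = 2` and
`s = −λ² − (λ+1)²`, or `q = 3` and `s = −3λ² − p(2λ−1)²`, or `p = 3` and
`s = −3λ² − q(2λ−1)²`, for some integer `λ`. -/
theorem stmt_15 (p q : ℕ) (hp : 2 ≤ p) (hq : 2 ≤ q) (s : ℤ) (hs : s ≤ -1)
    (N : ℕ) (hN : N = p + q)
    (h : ∃ φ : ((Unit ⊕ ((Σ i : Fin 2, Fin (![p - 1, q - 1] i)) ⊕ Unit)) → ℤ) →ₗ[ℤ]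
        (Fin N → ℤ),
      IsLatticeEmbedding (starGram (-3) ![p - 1, q - 1] (fun _ : Unit => s)) N φ) :
    (p = 2 ∧ q = 2 ∧ ∃ l : ℤ, s = -l ^ 2 - (l + 1) ^ 2) ∨
      (q = 3 ∧ ∃ l : ℤ, s = -3 * l ^ 2 - (p : ℤ) * (2 * l - 1) ^ 2) ∨
      (p = 3 ∧ ∃ l : ℤ, s = -3 * l ^ 2 - (q : ℤ) * (2 * l - 1) ^ 2) := by
  classical
  obtain ⟨φ, hφ⟩ := h
  obtain ⟨P, rfl⟩ : ∃ P, p = P + 2 := ⟨p - 2, by omega⟩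
  obtain ⟨R, rfl⟩ : ∃ R, q = R + 2 := ⟨q - 2, by omega⟩
  clear hp hq
  set Q := starGram (-3) ![P + 2 - 1, R + 2 - 1] (fun _ : Unit => s) with hQdef
  have key : ∀ u v, dotp (φ (Pi.single u 1)) (φ (Pi.single v 1)) = -(Q u v) := by
    intro u v
    have h1 := hφ (Pi.single u 1) (Pi.single v 1)
    rw [show dotp (φ (Pi.single u 1)) (φ (Pi.single v 1))
      = ∑ m, φ (Pi.single u 1) m * φ (Pi.single v 1) m from rfl, h1]
    congr 1
    simp [Pi.single_apply, ite_mul, mul_ite, Finset.sum_ite_eq', Finset.mem_univ]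
  set vc : Fin N → ℤ := φ (Pi.single (Sum.inl ()) 1) with hvc
  set ve : Fin N → ℤ := φ (Pi.single (Sum.inr (Sum.inr ())) 1) with hve
  set vA : ℕ → Fin N → ℤ := fun j =>
    if h : j < P + 1 then φ (Pi.single (Sum.inr (Sum.inl ⟨(0 : Fin 2), ⟨j, h⟩⟩)) 1) else 0 with hvA
  set vB : ℕ → Fin N → ℤ := fun j =>
    if h : j < R + 1 then φ (Pi.single (Sum.inr (Sum.inl ⟨(1 : Fin 2), ⟨j, h⟩⟩)) 1) else 0 with hvB
  have hcc : dotp vc vc = 3 := by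
    rw [hvc, key]; norm_num [hQdef, starGram]
  have hce : dotp vc ve = -1 := by
    rw [hvc, hve, key]; norm_num [hQdef, starGram]
  have hee : dotp ve ve = -s := by
    rw [hve, key]; norm_num [hQdef, starGram]
  have hAA : ∀ j, j < P + 1 → dotp (vA j) (vA j) = 2 := by
    intro j hj
    rw [hvA]; simp only [dif_pos hj]; rw [key]; norm_num [hQdef, starGram]
  have hAAadj : ∀ j, j + 1 < P + 1 → dotp (vA j) (vA (j+1)) = -1 := by
    intro j hj
    rw [hvA]; simp only [dif_pos (by omega : j < P + 1), dif_pos hj]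
    rw [key]; norm_num [hQdef, starGram]
  have hAAfar : ∀ j k, j + 2 ≤ k → k < P + 1 → dotp (vA j) (vA k) = 0 := by
    intro j k hjk hk
    rw [hvA]; simp only [dif_pos (by omega : j < P + 1), dif_pos hk]
    rw [key]; norm_num [hQdef, starGram]; omega
  have hcA : ∀ j, j + 1 < P + 1 → dotp vc (vA j) = 0 := by
    intro j hj
    rw [hvc, hvA]; simp only [dif_pos (by omega : j < P + 1)]
    rw [key]; norm_num [hQdef, starGram]; omega
  have hcAlast : dotp vc (vA P) = -1 := by
    rw [hvc, hvA]; simp only [dif_pos (by omega : P < P + 1)]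
    rw [key]; norm_num [hQdef, starGram]
  have hAe : ∀ j, j < P + 1 → dotp (vA j) ve = 0 := by
    intro j hj
    rw [hve, hvA]; simp only [dif_pos hj]; rw [key]; norm_num [hQdef, starGram]
  have hBB : ∀ j, j < R + 1 → dotp (vB j) (vB j) = 2 := by
    intro j hj
    rw [hvB]; simp only [dif_pos hj]; rw [key]; norm_num [hQdef, starGram]
  have hBBadj : ∀ j, j + 1 < R + 1 → dotp (vB j) (vB (j+1)) = -1 := by
    intro j hj
    rw [hvB]; simp only [dif_pos (by omega : j < R + 1), dif_pos hj]
    rw [key]; norm_num [hQdef, starGram]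
  have hBBfar : ∀ j k, j + 2 ≤ k → k < R + 1 → dotp (vB j) (vB k) = 0 := by
    intro j k hjk hk
    rw [hvB]; simp only [dif_pos (by omega : j < R + 1), dif_pos hk]
    rw [key]; norm_num [hQdef, starGram]; omega
  have hcB : ∀ j, j + 1 < R + 1 → dotp vc (vB j) = 0 := by
    intro j hj
    rw [hvc, hvB]; simp only [dif_pos (by omega : j < R + 1)]
    rw [key]; norm_num [hQdef, starGram]; omega
  have hcBlast : dotp vc (vB R) = -1 := by
    rw [hvc, hvB]; simp only [dif_pos (by omega : R < R + 1)]
    rw [key]; norm_num [hQdef, starGram]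
  have hBe : ∀ j, j < R + 1 → dotp (vB j) ve = 0 := by
    intro j hj
    rw [hve, hvB]; simp only [dif_pos hj]; rw [key]; norm_num [hQdef, starGram]
  have hAB : ∀ j k, j < P + 1 → k < R + 1 → dotp (vA j) (vB k) = 0 := by
    intro j k hj hk
    rw [hvA, hvB]; simp only [dif_pos hj, dif_pos hk]
    rw [key]; norm_num [hQdef, starGram]
  clear hφ key
  -- chain structure
  obtain ⟨yA, σA, hinjA, hsgnA, hformA⟩ :=
    chain_struct (P+1) (by omega) vA vc hAA hAAadj hAAfar hcA hcAlast
  obtain ⟨yB, σB, hinjB, hsgnB, hformB⟩ :=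
    chain_struct (R+1) (by omega) vB vc hBB hBBadj hBBfar hcB hcBlast
  by_cases hover : ∃ i, i < P + 2 ∧ ∃ k, k < R + 2 ∧ yA i = yB k
  · -- overlapping chains force p = q = 2
    obtain ⟨i, hi, k, hk, heq⟩ := hover
    obtain ⟨js, hjs⟩ : ∃ js, js = min k R := ⟨_, rfl⟩
    have hjsR : js ≤ R := by omega
    have hkcase : k = js ∨ k = js + 1 := by omega
    have hzz : yB js ≠ yB (js+1) := fun e => by
      have := hinjB js (by omega) (js+1) (by omega) e; omega
    have hbform : vB js = two_ite (yB js) (yB (js+1)) (σB js) (-σB (js+1)) :=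
      hformB js (by omega)
    have hbl : vB js (yB js) = σB js := by rw [hbform]; exact two_ite_left _ _ hzz
    have hbr : vB js (yB (js+1)) = -σB (js+1) := by rw [hbform]; exact two_ite_right _ _ hzz
    have hbne : vB js (yB k) ≠ 0 := by
      rcases hkcase with hc | hc
      · rw [hc, hbl]
        rcases hsgnB js (by omega) with h|h <;> rw [h] <;> omega
      · rw [hc, hbr]
        rcases hsgnB (js+1) (by omega) with h|h <;> rw [h] <;> simp
    have hall := orth_chain (P+1) vA yA σA hformA (vB js)
      (fun j hj => hAB j js hj (by omega))
    obtain ⟨τ, hτ⟩ : ∃ g : ℤ, g = σA 0 * vB js (yA 0) := ⟨_, rfl⟩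
    have hallτ : ∀ j, j ≤ P + 1 → σA j * vB js (yA j) = τ := fun j hj => by
      rw [hτ]; exact hall j hj
    have hτne : τ ≠ 0 := by
      intro h0
      have h1 := hallτ i (by omega)
      rw [heq, h0] at h1
      rcases hsgnA i (by omega) with h|h <;> rw [h] at h1 <;>
        simp at h1 <;> exact hbne h1
    have hsupp : ∀ j, j ≤ P + 1 → (yA j = yB js ∨ yA j = yB (js+1)) := by
      intro j hj
      have h1 := hallτ j hj
      have h2 : vB js (yA j) ≠ 0 := by
        intro h0; rw [h0, mul_zero] at h1; exact hτne h1.symm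
      rw [hbform] at h2
      exact two_ite_support h2
    have hP0 : P = 0 := by
      by_contra hP
      have h2P : 2 ≤ P + 1 := by omega
      rcases hsupp 0 (by omega) with h0|h0 <;> rcases hsupp 1 (by omega) with h1|h1 <;>
        rcases hsupp 2 (by omega) with h2|h2 <;>
        first
          | (have := hinjA 0 (by omega) 1 (by omega) (h0.trans h1.symm); omega)
          | (have := hinjA 0 (by omega) 2 (by omega) (h0.trans h2.symm); omega)
          | (have := hinjA 1 (by omega) 2 (by omega) (h1.trans h2.symm); omega)
    subst hP0
    have hne01 : yA 0 ≠ yA 1 := fun e => by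
      have := hinjA 0 (by omega) 1 (by omega) e; omega
    have hpair : (yA 0 = yB js ∧ yA 1 = yB (js+1)) ∨ (yA 0 = yB (js+1) ∧ yA 1 = yB js) := by
      rcases hsupp 0 (by omega) with h0|h0 <;> rcases hsupp 1 (by omega) with h1|h1
      · exact absurd (h0.trans h1.symm) hne01
      · exact Or.inl ⟨h0, h1⟩
      · exact Or.inr ⟨h0, h1⟩
      · exact absurd (h0.trans h1.symm) hne01
    have hb0 : vB js (yA 0) = σA 0 * τ := sgn_inv (hsgnA 0 (by omega)) (hallτ 0 (by omega))
    have hb1 : vB js (yA 1) = σA 1 * τ := sgn_inv (hsgnA 1 (by omega)) (hallτ 1 (by omega))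
    have hτpm : τ = 1 ∨ τ = -1 := by
      have hbA0sq : vB js (yA 0) * vB js (yA 0) = 1 := by
        rcases hpair with ⟨e0, _⟩ | ⟨e0, _⟩ <;> rw [e0]
        · rw [hbl]; exact sgn_sq (hsgnB js (by omega))
        · rw [hbr]
          have := sgn_sq (hsgnB (js+1) (by omega))
          linear_combination this
      have hτsq : τ * τ = 1 := by
        have s0 := sgn_sq (hsgnA 0 (by omega))
        calc τ * τ = (σA 0 * vB js (yA 0)) * (σA 0 * vB js (yA 0)) := by rw [← hτ]
        _ = (σA 0 * σA 0) * (vB js (yA 0) * vB js (yA 0)) := by ring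
        _ = 1 := by rw [s0, hbA0sq]; ring
      have hfac : (τ - 1) * (τ + 1) = 0 := by linear_combination hτsq
      rcases mul_eq_zero.mp hfac with h|h
      · left; linarith
      · right; linarith
    have hR0 : R = 0 := by
      by_contra hR
      obtain ⟨b', hb'dot, hb'orth⟩ : ∃ w : Fin N → ℤ,
          dotp (vB js) w = -1 ∧ ∀ j, j < 0 + 1 → dotp (vA j) w = 0 := by
        by_cases hjR : js < R
        · exact ⟨vB (js+1), hBBadj js (by omega),
            fun j hj => hAB j (js+1) hj (by omega)⟩
        · have hjsv : js = R := by omega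
          have hidx : js - 1 + 1 = js := by omega
          have hdd := hBBadj (js-1) (by omega)
          rw [hidx] at hdd
          exact ⟨vB (js-1), by rw [dotp_comm]; exact hdd,
            fun j hj => hAB j (js-1) hj (by omega)⟩
      have hall' := orth_chain (0+1) vA yA σA hformA b' hb'orth
      obtain ⟨τ', hτ'⟩ : ∃ g : ℤ, g = σA 0 * b' (yA 0) := ⟨_, rfl⟩
      have hb0' : b' (yA 0) = σA 0 * τ' := sgn_inv (hsgnA 0 (by omega)) hτ'.symm
      have hb1' : b' (yA 1) = σA 1 * τ' :=
        sgn_inv (hsgnA 1 (by omega)) (by rw [hall' 1 (by omega)]; exact hτ'.symm)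
      have hdot2 : σB js * b' (yB js) + (-σB (js+1)) * b' (yB (js+1)) = -1 := by
        rw [← dotp_two_ite, ← hbform]; exact hb'dot
      have key2 : vB js (yA 0) * b' (yA 0) + vB js (yA 1) * b' (yA 1) = -1 := by
        rcases hpair with ⟨e0, e1⟩ | ⟨e0, e1⟩ <;> rw [e0, e1]
        · rw [hbl, hbr]; linarith
        · rw [hbl, hbr]; linarith
      rw [hb0, hb1, hb0', hb1'] at key2
      have s0 := sgn_sq (hsgnA 0 (by omega : (0:ℕ) ≤ 0 + 1))
      have s1 := sgn_sq (hsgnA 1 (by omega : (1:ℕ) ≤ 0 + 1))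
      have h2ττ : 2 * (τ * τ') = -1 := by linear_combination key2 - (τ*τ')*s0 - (τ*τ')*s1
      rcases hτpm with h|h <;> rw [h] at h2ττ <;> omega
    subst hR0
    have hjs0 : js = 0 := by omega
    subst hjs0
    -- now p = q = 2
    have hfa : vA 0 = two_ite (yA 0) (yA 1) (σA 0) (-σA 1) := hformA 0 (by omega)
    -- c equations
    have e1 : σA 0 * vc (yA 0) + (-σA 1) * vc (yA 1) = -1 := by
      rw [← dotp_two_ite, ← hfa, dotp_comm]; exact hcAlast
    have e2 : σB 0 * vc (yB 0) + (-σB 1) * vc (yB 1) = -1 := by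
      rw [← dotp_two_ite, ← hbform, dotp_comm]; exact hcBlast
    obtain ⟨Acv, hAcv⟩ : ∃ g : ℤ, g = σA 0 * vc (yA 0) := ⟨_, rfl⟩
    obtain ⟨Bcv, hBcv⟩ : ∃ g : ℤ, g = σA 1 * vc (yA 1) := ⟨_, rfl⟩
    have s0 := sgn_sq (hsgnA 0 (by omega : (0:ℕ) ≤ 0 + 1))
    have s1 := sgn_sq (hsgnA 1 (by omega : (1:ℕ) ≤ 0 + 1))
    have e1' : Acv - Bcv = -1 := by rw [hAcv, hBcv]; linarith
    have e2' : τ * (Acv + Bcv) = -1 := by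
      have key2 : vB 0 (yA 0) * vc (yA 0) + vB 0 (yA 1) * vc (yA 1) = -1 := by
        rcases hpair with ⟨eq0, eq1⟩ | ⟨eq0, eq1⟩ <;> rw [eq0, eq1]
        · rw [hbl, hbr]; linarith
        · rw [hbl, hbr]; linarith
      rw [hb0, hb1] at key2
      rw [hAcv, hBcv]
      linear_combination key2
    have hsqc : Acv * Acv + Bcv * Bcv = 1 := by
      have h2 : (Acv + Bcv) * (Acv + Bcv) = 1 := by
        rcases hτpm with h|h <;> rw [h] at e2' <;> nlinarith [e2']
      nlinarith [e1', h2]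
    have hcy2 : vc (yA 0) * vc (yA 0) + vc (yA 1) * vc (yA 1) = 1 := by
      have q0 : vc (yA 0) * vc (yA 0) = Acv * Acv :=
        mul_from_twist (hsgnA 0 (by omega)) hAcv.symm hAcv.symm
      have q1 : vc (yA 1) * vc (yA 1) = Bcv * Bcv :=
        mul_from_twist (hsgnA 1 (by omega)) hBcv.symm hBcv.symm
      rw [q0, q1]; exact hsqc
    -- v vanishes on yA 0, yA 1
    have f1 : σA 0 * ve (yA 0) + (-σA 1) * ve (yA 1) = 0 := by
      rw [← dotp_two_ite, ← hfa]; exact hAe 0 (by omega)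
    have f2 : τ * (σA 0 * ve (yA 0) + σA 1 * ve (yA 1)) = 0 := by
      have key2 : vB 0 (yA 0) * ve (yA 0) + vB 0 (yA 1) * ve (yA 1) = 0 := by
        have hb'dot : σB 0 * ve (yB 0) + (-σB 1) * ve (yB 1) = 0 := by
          rw [← dotp_two_ite, ← hbform]; exact hBe 0 (by omega)
        rcases hpair with ⟨eq0, eq1⟩ | ⟨eq0, eq1⟩ <;> rw [eq0, eq1]
        · rw [hbl, hbr]; linarith
        · rw [hbl, hbr]; linarith
      rw [hb0, hb1] at key2
      linear_combination key2
    have hvy0 : ve (yA 0) = 0 := by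
      have h3 : σA 0 * ve (yA 0) + σA 1 * ve (yA 1) = 0 := by
        rcases hτpm with h|h <;> rw [h] at f2 <;> linarith
      have h4 : σA 0 * ve (yA 0) = 0 := by linarith
      rcases hsgnA 0 (by omega : (0:ℕ) ≤ 0 + 1) with h|h <;> rw [h] at h4 <;> linarith
    have hvy1 : ve (yA 1) = 0 := by
      have h3 : σA 0 * ve (yA 0) + σA 1 * ve (yA 1) = 0 := by
        rcases hτpm with h|h <;> rw [h] at f2 <;> linarith
      have h4 : σA 1 * ve (yA 1) = 0 := by rw [hvy0] at h3; linarith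
      rcases hsgnA 1 (by omega : (1:ℕ) ≤ 0 + 1) with h|h <;> rw [h] at h4 <;> linarith
    -- coordinate bookkeeping
    have hN4 : N = 4 := by omega
    have hTsplit : ∀ f : Fin N → ℤ,
        ∑ n, f n = ∑ n ∈ Finset.univ \ {yA 0, yA 1}, f n + (f (yA 0) + f (yA 1)) := by
      intro f
      have h1 := Finset.sum_sdiff (f := f) (Finset.subset_univ {yA 0, yA 1})
      rw [Finset.sum_pair hne01] at h1
      linarith
    have hTcard : (Finset.univ \ {yA 0, yA 1} : Finset (Fin N)).card = 2 := by
      rw [Finset.card_sdiff_of_subset (Finset.subset_univ _), Finset.card_pair hne01,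
        Finset.card_univ, Fintype.card_fin, hN4]
    obtain ⟨r, r', hrr, hT2⟩ := Finset.card_eq_two.mp hTcard
    have hTc : vc r * vc r + vc r' * vc r' = 2 := by
      have h0 : dotp vc vc = ∑ n, vc n * vc n := rfl
      rw [h0, hTsplit (fun n => vc n * vc n)] at hcc
      rw [hT2, Finset.sum_pair hrr] at hcc
      linarith [hcy2]
    obtain ⟨hcr, hcr'⟩ := sq_pm_one hTc
    have hTce : vc r * ve r + vc r' * ve r' = -1 := by
      have h0 : dotp vc ve = ∑ n, vc n * ve n := rfl
      rw [h0, hTsplit (fun n => vc n * ve n)] at hce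
      rw [hT2, Finset.sum_pair hrr, hvy0, hvy1] at hce
      linarith
    have hTee : ve r * ve r + ve r' * ve r' = -s := by
      have h0 : dotp ve ve = ∑ n, ve n * ve n := rfl
      rw [h0, hTsplit (fun n => ve n * ve n)] at hee
      rw [hT2, Finset.sum_pair hrr, hvy0, hvy1] at hee
      linarith
    refine Or.inl ⟨by omega, by omega, vc r * ve r, ?_⟩
    have q0 : ve r * ve r = (vc r * ve r) * (vc r * ve r) :=
      (mul_from_twist (va := vc r * ve r) (vb := vc r * ve r) hcr rfl rfl)
    have q1 : ve r' * ve r' = (vc r' * ve r') * (vc r' * ve r') :=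
      (mul_from_twist (va := vc r' * ve r') (vb := vc r' * ve r') hcr' rfl rfl)
    have hlb : vc r' * ve r' = -1 - vc r * ve r := by linarith
    rw [q0, q1, hlb] at hTee
    linear_combination hTee
  · -- disjoint chains
    push_neg at hover
    have hdisj : ∀ i, i < P + 2 → ∀ k, k < R + 2 → yA i ≠ yB k := fun i hi k hk =>
      hover i hi k hk
    have hattA := attach_vals (P+1) (by omega) vA yA σA hformA vc
      (fun j hj => by rw [dotp_comm]; exact hcA j hj) (by rw [dotp_comm]; exact hcAlast)
    have hattB := attach_vals (R+1) (by omega) vB yB σB hformB vc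
      (fun j hj => by rw [dotp_comm]; exact hcB j hj) (by rw [dotp_comm]; exact hcBlast)
    obtain ⟨γ, hγdef⟩ : ∃ g : ℤ, g = σA 0 * vc (yA 0) := ⟨_, rfl⟩
    obtain ⟨δ, hδdef⟩ : ∃ g : ℤ, g = σB 0 * vc (yB 0) := ⟨_, rfl⟩
    have hγ : ∀ j, j ≤ P → σA j * vc (yA j) = γ := fun j hj => by
      rw [hγdef]; exact hattA.1 j (by omega)
    have hγl : σA (P+1) * vc (yA (P+1)) = γ + 1 := by rw [hγdef]; exact hattA.2
    have hδ : ∀ j, j ≤ R → σB j * vc (yB j) = δ := fun j hj => by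
      rw [hδdef]; exact hattB.1 j (by omega)
    have hδl : σB (R+1) * vc (yB (R+1)) = δ + 1 := by rw [hδdef]; exact hattB.2
    have hαall := orth_chain (P+1) vA yA σA hformA ve (fun j hj => hAe j hj)
    have hβall := orth_chain (R+1) vB yB σB hformB ve (fun j hj => hBe j hj)
    obtain ⟨α, hαdef⟩ : ∃ g : ℤ, g = σA 0 * ve (yA 0) := ⟨_, rfl⟩
    obtain ⟨β, hβdef⟩ : ∃ g : ℤ, g = σB 0 * ve (yB 0) := ⟨_, rfl⟩
    have hα : ∀ j, j ≤ P + 1 → σA j * ve (yA j) = α := fun j hj => by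
      rw [hαdef]; exact hαall j hj
    have hβ : ∀ j, j ≤ R + 1 → σB j * ve (yB j) = β := fun j hj => by
      rw [hβdef]; exact hβall j hj
    -- the three global equations
    have hsplit : ∀ f : Fin N → ℤ, ∑ n, f n
        = ∑ j ∈ Finset.range (P+1+1), f (yA j) + ∑ k ∈ Finset.range (R+1+1), f (yB k) := by
      intro f
      exact split_univ_sum (by omega) yA yB
        (fun i hi j hj => hinjA i (by omega) j (by omega))
        (fun i hi j hj => hinjB i (by omega) j (by omega))
        (fun i hi j hj => hdisj i (by omega) j (by omega)) f
    have E1 : ((P+1 : ℕ) : ℤ) * (γ*γ) + (γ+1)*(γ+1)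
        + (((R+1 : ℕ) : ℤ) * (δ*δ) + (δ+1)*(δ+1)) = 3 := by
      have h0 : dotp vc vc = ∑ n, vc n * vc n := rfl
      rw [h0, hsplit (fun n => vc n * vc n)] at hcc
      have eA : ∑ j ∈ Finset.range (P+1+1), vc (yA j) * vc (yA j)
          = ((P+1 : ℕ) : ℤ) * (γ*γ) + (γ+1)*(γ+1) := by
        apply sum_range_const_last (by omega)
        · intro j hj
          exact mul_from_twist (hsgnA j (by omega)) (hγ j (by omega)) (hγ j (by omega))
        · exact mul_from_twist (hsgnA (P+1) (by omega)) hγl hγl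
      have eB : ∑ k ∈ Finset.range (R+1+1), vc (yB k) * vc (yB k)
          = ((R+1 : ℕ) : ℤ) * (δ*δ) + (δ+1)*(δ+1) := by
        apply sum_range_const_last (by omega)
        · intro j hj
          exact mul_from_twist (hsgnB j (by omega)) (hδ j (by omega)) (hδ j (by omega))
        · exact mul_from_twist (hsgnB (R+1) (by omega)) hδl hδl
      rw [eA, eB] at hcc
      linarith
    have E2 : ((P+1 : ℕ) : ℤ) * (γ*α) + (γ+1)*α
        + (((R+1 : ℕ) : ℤ) * (δ*β) + (δ+1)*β) = -1 := by
      have h0 : dotp vc ve = ∑ n, vc n * ve n := rfl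
      rw [h0, hsplit (fun n => vc n * ve n)] at hce
      have eA : ∑ j ∈ Finset.range (P+1+1), vc (yA j) * ve (yA j)
          = ((P+1 : ℕ) : ℤ) * (γ*α) + (γ+1)*α := by
        apply sum_range_const_last (by omega)
        · intro j hj
          exact mul_from_twist (hsgnA j (by omega)) (hγ j (by omega)) (hα j (by omega))
        · exact mul_from_twist (hsgnA (P+1) (by omega)) hγl (hα (P+1) (by omega))
      have eB : ∑ k ∈ Finset.range (R+1+1), vc (yB k) * ve (yB k)
          = ((R+1 : ℕ) : ℤ) * (δ*β) + (δ+1)*β := by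
        apply sum_range_const_last (by omega)
        · intro j hj
          exact mul_from_twist (hsgnB j (by omega)) (hδ j (by omega)) (hβ j (by omega))
        · exact mul_from_twist (hsgnB (R+1) (by omega)) hδl (hβ (R+1) (by omega))
      rw [eA, eB] at hce
      linarith
    have E3 : ((P+1 : ℕ) : ℤ) * (α*α) + α*α
        + (((R+1 : ℕ) : ℤ) * (β*β) + β*β) = -s := by
      have h0 : dotp ve ve = ∑ n, ve n * ve n := rfl
      rw [h0, hsplit (fun n => ve n * ve n)] at hee
      have eA : ∑ j ∈ Finset.range (P+1+1), ve (yA j) * ve (yA j)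
          = ((P+1 : ℕ) : ℤ) * (α*α) + α*α := by
        apply sum_range_const_last (by omega)
        · intro j hj
          exact mul_from_twist (hsgnA j (by omega)) (hα j (by omega)) (hα j (by omega))
        · exact mul_from_twist (hsgnA (P+1) (by omega)) (hα (P+1) (by omega)) (hα (P+1) (by omega))
      have eB : ∑ k ∈ Finset.range (R+1+1), ve (yB k) * ve (yB k)
          = ((R+1 : ℕ) : ℤ) * (β*β) + β*β := by
        apply sum_range_const_last (by omega)
        · intro j hj
          exact mul_from_twist (hsgnB j (by omega)) (hβ j (by omega)) (hβ j (by omega))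
        · exact mul_from_twist (hsgnB (R+1) (by omega)) (hβ (R+1) (by omega)) (hβ (R+1) (by omega))
      rw [eA, eB] at hee
      linarith
    -- solve for γ, δ
    have hPc : (1:ℤ) ≤ ((P+1 : ℕ) : ℤ) := by push_cast; omega
    have hRc : (1:ℤ) ≤ ((R+1 : ℕ) : ℤ) := by push_cast; omega
    obtain ⟨hγ01, hδ01⟩ := solve_gd hPc hRc E1
    rcases hγ01 with hγ0 | hγ0 <;> rcases hδ01 with hδ0 | hδ0 <;> subst hγ0 <;> subst hδ0
    · -- (0,0): impossible
      exfalso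
      push_cast at E1
      nlinarith [E1]
    · -- (0,-1): q = 3
      have hR1 : R = 1 := by push_cast at E1; omega
      subst hR1
      refine Or.inr (Or.inl ⟨by omega, β, ?_⟩)
      have hαv : α = 2*β - 1 := by push_cast at E2; linarith
      rw [hαv] at E3
      push_cast at E3 ⊢
      linear_combination E3
    · -- (-1,0): p = 3
      have hP1 : P = 1 := by push_cast at E1; omega
      subst hP1
      refine Or.inr (Or.inr ⟨by omega, α, ?_⟩)
      have hβv : β = 2*α - 1 := by push_cast at E2; linarith
      rw [hβv] at E3
      push_cast at E3 ⊢
      linear_combination E3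
    · -- (-1,-1): P + R = 1
      have hPR : P + R = 1 := by push_cast at E1; omega
      rcases (by omega : P = 0 ∧ R = 1 ∨ P = 1 ∧ R = 0) with ⟨hP0, hR1⟩ | ⟨hP1, hR0⟩
      · subst hP0; subst hR1
        refine Or.inr (Or.inl ⟨by omega, β, ?_⟩)
        have hαv : α = 1 - 2*β := by push_cast at E2; linarith
        rw [hαv] at E3
        push_cast at E3 ⊢
        linear_combination E3
      · subst hP1; subst hR0
        refine Or.inr (Or.inr ⟨by omega, α, ?_⟩)
        have hβv : β = 1 - 2*α := by push_cast at E2; linarith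
        rw [hβv] at E3
        push_cast at E3 ⊢
        linear_combination E3
end

section
/- Let p, q, r ≥ 2 and s ≤ −1 be integers, and let N = p + q + r − 1. Let Q be the Gram matrix of the star-shaped plumbing graph consisting of a central vertex of weight −3, three chains of p − 1, q − 1, and r − 1 vertices of weight −2 attached to the central vertex, and one additional vertex of weight s adjacent to the central vertex. If Q admits a lattice embedding into ℤ^N, then two of the integers p, q, r are equal to 2 and, denoting by u the remaining one, there is an integer λ such that s = −uλ² − (λ+1)². -/
/-!
The images of the `−2`-vertices are roots `±e a ± e b` of `ℤ^N`. An arm of `m` such roots whose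
last root pairs to `−1` with the central vector `x` is embedded in the standard way
`e a₀ − e a₁, …, e aₘ₋₁ − e aₘ` up to signs, on `m + 1` distinct coordinates; the only other
embedding of a chain, the `D₃`-shaped one, is ruled out by a parity argument. The three arms
then use `N + 1` coordinates, so two of them share one. A root orthogonal to a standard chain has
constant signed coordinates along it; hence both of these arms are single roots on the same two
coordinates `c, d`, and the third arm avoids `c, d`, leaving exactly one further coordinate `f`.
Splitting `x ⬝ᵥ x = 3`, `x ⬝ᵥ y = −1` and `y ⬝ᵥ y = −s`, for the image `y` of the extra vertex,
over `{c, d}`, the third arm and `f` gives integer equations whose solutions are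
`−s = u λ² + (λ + 1)²`.
-/

open Finset

lemma IsLatticeEmbedding.dotProduct_single {V : Type} [Fintype V] [DecidableEq V]
    {Q : Matrix V V ℤ} {N : ℕ} {φ : (V → ℤ) →ₗ[ℤ] (Fin N → ℤ)} (hφ : IsLatticeEmbedding Q N φ)
    (u v : V) : φ (Pi.single u 1) ⬝ᵥ φ (Pi.single v 1) = -Q u v := by
  simpa [Pi.single_apply, dotProduct] using hφ (Pi.single u 1) (Pi.single v 1)

namespace StarLattice

variable {ι : Type*}

section Fintype

variable [Fintype ι] {v : ι → ℤ}

lemma sum_mul_self_le_dotProduct_self (S : Finset ι) (v : ι → ℤ) :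
    ∑ x ∈ S, v x * v x ≤ v ⬝ᵥ v :=
  sum_le_univ_sum_of_nonneg fun x => mul_self_nonneg (v x)

lemma exists_apply_ne_zero (hv : v ⬝ᵥ v = 2) : ∃ c, v c ≠ 0 := by
  by_contra! H
  simp [show v = 0 from funext H] at hv

structure IsChain (z : ℕ → ι → ℤ) (m : ℕ) : Prop where
  dotProduct_self : ∀ j < m, z j ⬝ᵥ z j = 2
  dotProduct_succ : ∀ j, j + 1 < m → z j ⬝ᵥ z (j + 1) = -1
  dotProduct_of_succ_lt : ∀ j k, j + 1 < k → k < m → z j ⬝ᵥ z k = 0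

lemma exists_ne_apply_eq_of_card_lt {κ : Type*} [Fintype κ] {n : κ → ℕ} {A : κ → ℕ → ι}
    (hA : ∀ i, Set.InjOn (A i) (range (n i))) (hcard : Fintype.card ι < ∑ i, n i) :
    ∃ i i', i ≠ i' ∧ ∃ k < n i, ∃ k' < n i', A i k = A i' k' := by
  obtain ⟨⟨i, k⟩, ⟨i', k'⟩, hne, he⟩ := Fintype.exists_ne_map_eq_of_card_lt
    (fun x : Σ i, Fin (n i) => A x.1 x.2) (by simpa [Fintype.card_sigma] using hcard)
  refine ⟨i, i', fun h => hne ?_, k, k.2, k', k'.2, he⟩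
  subst h
  simp only at he
  rw [Fin.ext (hA i (by simp) (by simp) he)]

end Fintype

variable [DecidableEq ι]

structure IsRootOn (c d : ι) (u : ι → ℤ) : Prop where
  eq : u = Pi.single c (u c) + Pi.single d (u d)
  mul_self_left : u c * u c = 1
  mul_self_right : u d * u d = 1

/-- The standard embedding of the root lattice `A_m`, up to signs and the choice of
coordinates. -/
structure IsStdChain (z : ℕ → ι → ℤ) (m : ℕ) (a : ℕ → ι) (s : ℕ → ℤ) : Prop where
  injOn : Set.InjOn a (range (m + 1))
  mul_self : ∀ j ≤ m, s j * s j = 1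
  eq : ∀ j < m, z j = Pi.single (a j) (s j) - Pi.single (a (j + 1)) (s (j + 1))

namespace IsStdChain

variable {z : ℕ → ι → ℤ} {m : ℕ} {a : ℕ → ι} {s : ℕ → ℤ}

lemma ne_succ (hc : IsStdChain z m a s) {j : ℕ} (hj : j < m) : a j ≠ a (j + 1) := fun h => by
  have := hc.injOn (by simp only [coe_range, Set.mem_Iio]; omega)
    (by simp only [coe_range, Set.mem_Iio]; omega) h
  omega

lemma sign_ne_zero (hc : IsStdChain z m a s) {j : ℕ} (hj : j ≤ m) : s j ≠ 0 := fun h => by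
  simpa [h] using hc.mul_self j hj

lemma apply_left (hc : IsStdChain z m a s) {j : ℕ} (hj : j < m) : z j (a j) = s j := by
  simp [hc.eq j hj, hc.ne_succ hj]

lemma apply_right (hc : IsStdChain z m a s) {j : ℕ} (hj : j < m) :
    z j (a (j + 1)) = -s (j + 1) := by
  simp [hc.eq j hj, (hc.ne_succ hj).symm]

lemma exists_apply_ne_zero (hc : IsStdChain z m a s) (hm : 1 ≤ m) {k : ℕ} (hk : k ≤ m) :
    ∃ j < m, z j (a k) ≠ 0 := by
  rcases hk.lt_or_eq with hk | rfl
  · exact ⟨k, hk, by rw [hc.apply_left hk]; exact hc.sign_ne_zero hk.le⟩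
  · refine ⟨k - 1, by omega, ?_⟩
    have hk' := hc.apply_right (j := k - 1) (by omega)
    rw [Nat.sub_add_cancel hm] at hk'
    rw [hk', neg_ne_zero]
    exact hc.sign_ne_zero le_rfl

lemma apply_mul_apply (hc : IsStdChain z m a s) {j : ℕ} (hj : j ≤ m) (v w : ι → ℤ) :
    v (a j) * w (a j) = (v (a j) * s j) * (w (a j) * s j) := by
  linear_combination (-(v (a j) * w (a j))) * hc.mul_self j hj

end IsStdChain

section

variable {z : ℕ → ι → ℤ} {m : ℕ} {a : ℕ → ι} {s : ℕ → ℤ}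

lemma isStdChain_one {g h : ι} (hgh : g ≠ h) {α β : ℤ} (hα : α * α = 1) (hβ : β * β = 1)
    (hz : z 0 = Pi.single g α - Pi.single h β) :
    IsStdChain z 1 (fun j => if j = 0 then g else h) (fun j => if j = 0 then α else β) where
  injOn j hj k hk hjk := by
    simp only [coe_range, Set.mem_Iio] at hj hk
    interval_cases j <;> interval_cases k <;> simp_all [eq_comm]
  mul_self j hj := by interval_cases j <;> simpa
  eq j hj := by
    obtain rfl : j = 0 := by omega
    simpa using hz

lemma IsStdChain.reverse_one (hc : IsStdChain z 1 a s) :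
    IsStdChain z 1 (fun j => if j = 0 then a 1 else a 0) (fun j => if j = 0 then -s 1 else -s 0) :=
  isStdChain_one (hc.ne_succ zero_lt_one).symm (by simpa using hc.mul_self 1 le_rfl)
    (by simpa using hc.mul_self 0 zero_le_one)
    (by rw [hc.eq 0 zero_lt_one, Pi.single_neg, Pi.single_neg]; abel)

lemma IsStdChain.snoc (hc : IsStdChain z m a s) {b : ι} (hb : ∀ j ≤ m, a j ≠ b) {β : ℤ}
    (hβ : β * β = 1) (hz : z m = Pi.single (a m) (s m) - Pi.single b β) :
    IsStdChain z (m + 1) (Function.update a (m + 1) b) (Function.update s (m + 1) β) where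
  injOn j hj k hk hjk := by
    simp only [coe_range, Set.mem_Iio] at hj hk
    rcases Nat.lt_succ_iff_lt_or_eq.1 hj with hj | rfl <;>
      rcases Nat.lt_succ_iff_lt_or_eq.1 hk with hk | rfl
    · simp only [Function.update_of_ne (Nat.ne_of_lt hj),
        Function.update_of_ne (Nat.ne_of_lt hk)] at hjk
      exact hc.injOn (by simpa using hj) (by simpa using hk) hjk
    · rw [Function.update_of_ne (Nat.ne_of_lt hj), Function.update_self] at hjk
      exact absurd hjk (hb j (by omega))
    · rw [Function.update_of_ne (Nat.ne_of_lt hk), Function.update_self] at hjk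
      exact absurd hjk.symm (hb k (by omega))
    · rfl
  mul_self j hj := by
    rcases hj.lt_or_eq with hj | rfl
    · rw [Function.update_of_ne (by omega)]; exact hc.mul_self j (by omega)
    · simpa using hβ
  eq j hj := by
    rw [Function.update_of_ne (by omega), Function.update_of_ne (by omega)]
    rcases Nat.lt_succ_iff_lt_or_eq.1 hj with hj | rfl
    · rw [Function.update_of_ne (by omega), Function.update_of_ne (by omega)]
      exact hc.eq j hj
    · simpa using hz

end

variable [Fintype ι]

section Roots

variable {v : ι → ℤ}

lemma apply_eq_zero_of_sum_mul_self_eq {S : Finset ι} (h : ∑ x ∈ S, v x * v x = v ⬝ᵥ v)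
    {x : ι} (hx : x ∉ S) : v x = 0 := by
  have hcompl : ∑ y ∈ Sᶜ, v y * v y = 0 := by
    have := sum_add_sum_compl S fun y => v y * v y
    rw [← dotProduct] at this
    linarith
  have := (sum_eq_zero_iff_of_nonneg fun y _ => mul_self_nonneg (v y)).1 hcompl x
    (mem_compl.2 hx)
  exact mul_self_eq_zero.1 this

lemma IsRootOn.dotProduct {c d : ι} {u : ι → ℤ} (hu : IsRootOn c d u) (v : ι → ℤ) :
    v ⬝ᵥ u = v c * u c + v d * u d := by
  conv_lhs => rw [hu.eq]
  rw [dotProduct_add, dotProduct_single, dotProduct_single]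

lemma isRootOn_of_dotProduct_self_eq_two (hv : v ⬝ᵥ v = 2) {c d : ι} (hcd : c ≠ d)
    (hc : v c ≠ 0) (hd : v d ≠ 0) : IsRootOn c d v := by
  have hle : v c * v c + v d * v d ≤ 2 := by
    have := sum_mul_self_le_dotProduct_self {c, d} v
    rwa [sum_pair hcd, hv] at this
  have hc1 : 0 < v c * v c := mul_self_pos.2 hc
  have hd1 : 0 < v d * v d := mul_self_pos.2 hd
  have hc' : v c * v c = 1 := by omega
  have hd' : v d * v d = 1 := by omega
  refine ⟨funext fun x => ?_, hc', hd'⟩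
  by_cases hxc : x = c
  · subst hxc; simp [hcd.symm]
  by_cases hxd : x = d
  · subst hxd; simp [hcd]
  rw [Pi.add_apply, Pi.single_eq_of_ne hxc, Pi.single_eq_of_ne hxd, add_zero]
  refine apply_eq_zero_of_sum_mul_self_eq (S := {c, d}) ?_ (by simp [hxc, hxd])
  rw [sum_pair hcd, hc', hd', hv]; rfl

lemma exists_ne_apply_ne_zero (hv : v ⬝ᵥ v = 2) {c : ι} (hc : v c ≠ 0) :
    ∃ d, d ≠ c ∧ v d ≠ 0 := by
  by_contra! H
  have hsq : v c * v c = 2 := by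
    rw [← hv]
    exact (sum_eq_single (f := fun x => v x * v x) c (fun x _ hx => by simp [H x hx])
      (by simp)).symm
  have h1 : v c ≤ 1 := by nlinarith
  have h2 : -1 ≤ v c := by nlinarith
  interval_cases h : v c <;> simp_all

lemma IsRootOn.two_mul_add_eq {c d : ι} {u w : ι → ℤ} (hu : IsRootOn c d u)
    (hw : IsRootOn c d w) (huw : u ⬝ᵥ w = 0) (v : ι → ℤ) :
    2 * (v c * v c + v d * v d) = (v ⬝ᵥ u) ^ 2 + (v ⬝ᵥ w) ^ 2 := by
  rw [hw.dotProduct] at huw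
  rw [hu.dotProduct, hw.dotProduct]
  have hu1 := hu.mul_self_left
  have hu2 := hu.mul_self_right
  have hw1 := hw.mul_self_left
  have hw2 := hw.mul_self_right
  have hcross : u c * u d + w c * w d = 0 := by
    linear_combination (u d * w c) * huw - u c * u d * hw1 - w c * w d * hu2
  linear_combination (-(v c * v c)) * (hu1 + hw1) - v d * v d * (hu2 + hw2)
    - 2 * v c * v d * hcross

lemma IsRootOn.apply_eq_zero_of_orthogonal {c d : ι} {u w : ι → ℤ} (hu : IsRootOn c d u)
    (hw : IsRootOn c d w) (huw : u ⬝ᵥ w = 0) (hvu : v ⬝ᵥ u = 0) (hvw : v ⬝ᵥ w = 0) :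
    v c = 0 ∧ v d = 0 := by
  have := hu.two_mul_add_eq hw huw v
  rw [hvu, hvw] at this
  constructor <;> nlinarith [mul_self_nonneg (v c), mul_self_nonneg (v d)]

end Roots

namespace IsStdChain

variable {z : ℕ → ι → ℤ} {m : ℕ} {a : ℕ → ι} {s : ℕ → ℤ}

lemma dotProduct_eq (hc : IsStdChain z m a s) {j : ℕ} (hj : j < m) (v : ι → ℤ) :
    v ⬝ᵥ z j = v (a j) * s j - v (a (j + 1)) * s (j + 1) := by
  rw [hc.eq j hj, dotProduct_sub, dotProduct_single, dotProduct_single]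

lemma dotProduct_self (hc : IsStdChain z m a s) {j : ℕ} (hj : j < m) : z j ⬝ᵥ z j = 2 := by
  rw [hc.dotProduct_eq hj, hc.apply_left hj, hc.apply_right hj,
    hc.mul_self j hj.le, neg_mul, hc.mul_self (j + 1) hj]
  norm_num

lemma isRootOn (hc : IsStdChain z 1 a s) : IsRootOn (a 0) (a 1) (z 0) :=
  isRootOn_of_dotProduct_self_eq_two (hc.dotProduct_self zero_lt_one) (hc.ne_succ zero_lt_one)
    (by rw [hc.apply_left zero_lt_one]; exact hc.sign_ne_zero zero_le_one)
    (by rw [hc.apply_right zero_lt_one, neg_ne_zero]; exact hc.sign_ne_zero le_rfl)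

lemma sum_mul_self_le (hc : IsStdChain z m a s) (v : ι → ℤ) :
    ∑ k ∈ range (m + 1), (v (a k) * s k) * (v (a k) * s k) ≤ v ⬝ᵥ v := by
  rw [← sum_congr rfl fun k hk =>
      hc.apply_mul_apply (Nat.lt_add_one_iff.1 (mem_range.1 hk)) v v,
    ← sum_image (f := fun x => v x * v x) hc.injOn]
  exact sum_mul_self_le_dotProduct_self _ v

lemma signed_eq_of_orthogonal (hc : IsStdChain z m a s) {v : ι → ℤ} {k : ℕ} (hk : k ≤ m)
    (hv : ∀ j < k, v ⬝ᵥ z j = 0) : ∀ j ≤ k, v (a j) * s j = v (a 0) * s 0 := by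
  intro j hj
  induction j with
  | zero => rfl
  | succ j ih =>
    have := hc.dotProduct_eq (j := j) (by omega) v
    rw [hv j hj] at this
    linarith [ih (by omega)]

lemma signed_eq_of_dotProduct_last (hc : IsStdChain z m a s) (hm : 1 ≤ m) {v : ι → ℤ}
    (hv : ∀ j < m, v ⬝ᵥ z j = if j + 1 = m then -1 else 0) :
    (∀ j < m, v (a j) * s j = v (a 0) * s 0) ∧ v (a m) * s m = v (a 0) * s 0 + 1 := by
  have hconst := hc.signed_eq_of_orthogonal (k := m - 1) (by omega)
    fun j hj => by rw [hv j (by omega), if_neg (by omega)]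
  refine ⟨fun j hj => hconst j (by omega), ?_⟩
  have hlast := hc.dotProduct_eq (j := m - 1) (by omega) v
  rw [hv _ (by omega), if_pos (by omega), Nat.sub_add_cancel hm] at hlast
  linarith [hconst (m - 1) le_rfl]

end IsStdChain

lemma sum_range_succ_eq_of_eq {f : ℕ → ℤ} {ℓ : ℕ} {A B : ℤ} (h : ∀ k < ℓ, f k = A)
    (hℓ : f ℓ = B) : ∑ k ∈ range (ℓ + 1), f k = ℓ * A + B := by
  rw [sum_range_succ, sum_congr rfl fun k hk => h k (mem_range.1 hk), sum_const, card_range,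
    nsmul_eq_mul, hℓ]

section Classification

variable {z : ℕ → ι → ℤ} {m : ℕ} {a : ℕ → ι} {s : ℕ → ℤ}

lemma IsStdChain.exists_succ_of_signed_eq_zero (hc : IsStdChain z m a s)
    (hw : z m ⬝ᵥ z m = 2) (hzero : ∀ j < m, z m (a j) * s j = 0)
    (hlast : z m (a m) * s m = 1) : ∃ a' s', IsStdChain z (m + 1) a' s' := by
  have hm : z m (a m) = s m := by linear_combination s m * hlast - z m (a m) * hc.mul_self m le_rfl
  have hne : z m (a m) ≠ 0 := by rw [hm]; exact hc.sign_ne_zero le_rfl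
  obtain ⟨b, hb, hzb⟩ := exists_ne_apply_ne_zero hw hne
  have hroot := isRootOn_of_dotProduct_self_eq_two hw hb.symm hne hzb
  refine ⟨_, _, hc.snoc (b := b) (β := -z m b) (fun j hj hab => ?_)
    (by simpa using hroot.mul_self_right) ?_⟩
  · rcases hj.lt_or_eq with hj | rfl
    · exact hzb (by rw [← hab]; simpa [hc.sign_ne_zero hj.le] using hzero j hj)
    · exact hb hab.symm
  · rw [Pi.single_neg, sub_neg_eq_add, ← hm]
    exact hroot.eq

lemma IsStdChain.extend (hc : IsStdChain z m a s) (hm : 1 ≤ m) (hw : z m ⬝ᵥ z m = 2)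
    (hwz : ∀ j < m, z m ⬝ᵥ z j = if j + 1 = m then -1 else 0) :
    (∃ a' s', IsStdChain z (m + 1) a' s') ∨
      (m = 2 ∧ z 2 = -Pi.single (a 0) (s 0) - Pi.single (a 1) (s 1)) := by
  obtain ⟨hconst, hlast⟩ := hc.signed_eq_of_dotProduct_last hm hwz
  set η := z m (a 0) * s 0
  have hbessel : m * (η * η) + (η + 1) * (η + 1) ≤ 2 := by
    rw [← hw, ← sum_range_succ_eq_of_eq (f := fun k => z m (a k) * s k * (z m (a k) * s k))
      (fun k hk => by rw [hconst k hk]) (by rw [hlast])]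
    exact hc.sum_mul_self_le (z m)
  have hm' : (1 : ℤ) ≤ m := by exact_mod_cast hm
  have hη : η = 0 ∨ η = -1 ∧ m ≤ 2 := by
    have h1 : η ≤ 0 := by nlinarith
    have h2 : -1 ≤ η := by nlinarith
    interval_cases η
    · exact Or.inr ⟨rfl, by nlinarith⟩
    · exact Or.inl rfl
  rcases hη with hη | ⟨hη, hm2⟩
  · exact Or.inl <| hc.exists_succ_of_signed_eq_zero hw (fun j hj => by rw [hconst j hj, hη])
      (by rw [hlast, hη, zero_add])
  obtain rfl | rfl : m = 1 ∨ m = 2 := by omega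
  · -- read the one-vector chain backwards: then `z 1` meets it only in its last coordinate
    refine Or.inl (hc.reverse_one.exists_succ_of_signed_eq_zero hw (fun j hj => ?_) ?_)
    · obtain rfl : j = 0 := by omega
      simp only [if_pos]
      linear_combination -hlast - hη
    · simp only [if_neg one_ne_zero]
      linear_combination -hconst 0 zero_lt_one - hη
  · refine Or.inr ⟨rfl, ?_⟩
    have hval : ∀ j < 2, z 2 (a j) = -s j := fun j hj => by
      linear_combination s j * (hconst j hj) + s j * hη - z 2 (a j) * hc.mul_self j (by omega)
    have hroot := isRootOn_of_dotProduct_self_eq_two hw (hc.ne_succ (j := 0) (by omega))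
      (by rw [hval 0 (by omega)]; exact neg_ne_zero.2 (hc.sign_ne_zero (by omega)))
      (by rw [hval 1 (by omega)]; exact neg_ne_zero.2 (hc.sign_ne_zero (by omega)))
    rw [hroot.eq, hval 0 (by omega), hval 1 (by omega), Pi.single_neg, Pi.single_neg,
      sub_eq_add_neg]

lemma exists_isStdChain_one (hw : z 0 ⬝ᵥ z 0 = 2) : ∃ a s, IsStdChain z 1 a s := by
  obtain ⟨g, hg⟩ := exists_apply_ne_zero hw
  obtain ⟨h, hhg, hh⟩ := exists_ne_apply_ne_zero hw hg
  have hroot := isRootOn_of_dotProduct_self_eq_two hw hhg.symm hg hh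
  exact ⟨_, _, isStdChain_one hhg.symm hroot.mul_self_left (β := -z 0 h)
    (by simpa using hroot.mul_self_right) (by rw [Pi.single_neg, sub_neg_eq_add]; exact hroot.eq)⟩

/-- `v ⬝ᵥ z 0` and `v ⬝ᵥ z 2` have the same parity. -/
lemma IsStdChain.not_bent (hc : IsStdChain z 2 a s)
    (hbent : z 2 = -Pi.single (a 0) (s 0) - Pi.single (a 1) (s 1)) {v : ι → ℤ}
    (h0 : v ⬝ᵥ z 0 = 0) (h2 : v ⬝ᵥ z 2 = -1) : False := by
  rw [hc.dotProduct_eq (by norm_num), zero_add] at h0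
  rw [hbent, dotProduct_sub, dotProduct_neg, dotProduct_single, dotProduct_single] at h2
  omega

lemma IsChain.exists_isStdChain (hc : IsChain z m) (hm : 1 ≤ m) {x : ι → ℤ}
    (hx : ∀ j < m, x ⬝ᵥ z j = if j + 1 = m then -1 else 0) : ∃ a s, IsStdChain z m a s := by
  suffices ∀ k, 1 ≤ k → k ≤ m → ∃ a s, IsStdChain z k a s from this m hm le_rfl
  intro k hk
  induction k, hk using Nat.le_induction with
  | base => exact fun _ => exists_isStdChain_one (hc.dotProduct_self 0 (by omega))
  | succ k hk ih =>
    intro hkm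
    obtain ⟨a, s, hstd⟩ := ih (by omega)
    have hwz : ∀ j < k, z k ⬝ᵥ z j = if j + 1 = k then -1 else 0 := fun j hj => by
      rw [dotProduct_comm]
      split_ifs with h
      · subst h; exact hc.dotProduct_succ j hkm
      · exact hc.dotProduct_of_succ_lt j k (by omega) (by omega)
    rcases hstd.extend hk (hc.dotProduct_self k (by omega)) hwz with h | ⟨rfl, hbent⟩
    · exact h
    rcases hkm.lt_or_eq with h4 | rfl
    · refine (hstd.not_bent hbent (v := z 3) ?_ ?_).elim <;> rw [dotProduct_comm]
      exacts [hc.dotProduct_of_succ_lt 0 3 (by omega) h4, hc.dotProduct_succ 2 h4]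
    · exact (hstd.not_bent hbent (by simpa using hx 0 (by omega))
        (by simpa using hx 2 (by omega))).elim

end Classification

section Sharing

variable {z z' : ℕ → ι → ℤ} {m m' : ℕ} {a a' : ℕ → ι} {s s' : ℕ → ℤ}

/-- A root orthogonal to a standard chain has constant signed coordinates along it, so if it
meets the chain at all it meets all of its `m + 1 ≤ 2` coordinates. -/
lemma IsStdChain.eq_one_and_isRootOn (hc : IsStdChain z m a s) (hm : 1 ≤ m) {w : ι → ℤ}
    (hw : w ⬝ᵥ w = 2) (horth : ∀ j < m, w ⬝ᵥ z j = 0) {k : ℕ} (hk : k ≤ m)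
    (hwk : w (a k) ≠ 0) : m = 1 ∧ IsRootOn (a 0) (a 1) w := by
  have hconst := hc.signed_eq_of_orthogonal le_rfl horth
  set σ := w (a 0) * s 0
  have hσ : σ ≠ 0 := by rw [← hconst k hk]; exact mul_ne_zero hwk (hc.sign_ne_zero hk)
  have hbessel := hc.sum_mul_self_le w
  rw [sum_congr rfl fun j hj => by rw [hconst j (Nat.lt_add_one_iff.1 (mem_range.1 hj))],
    sum_const, card_range, nsmul_eq_mul, hw] at hbessel
  have hσσ : 0 < σ * σ := mul_self_pos.2 hσ
  obtain rfl : m = 1 := by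
    push_cast at hbessel
    have : (m : ℤ) + 1 ≤ 2 := by nlinarith
    omega
  refine ⟨rfl, isRootOn_of_dotProduct_self_eq_two hw (hc.ne_succ zero_lt_one)
    (left_ne_zero_of_mul hσ) (left_ne_zero_of_mul (a := w (a 1)) (b := s 1) ?_)⟩
  rw [hconst 1 le_rfl]
  exact hσ

lemma IsStdChain.eq_one_of_share (hc : IsStdChain z m a s) (hc' : IsStdChain z' m' a' s')
    (hm : 1 ≤ m) (hm' : 1 ≤ m') (horth : ∀ j < m, ∀ j' < m', z' j' ⬝ᵥ z j = 0)
    {k k' : ℕ} (hk : k ≤ m) (hk' : k' ≤ m') (he : a k = a' k') :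
    m = 1 ∧ ∃ j' < m', IsRootOn (a 0) (a 1) (z' j') := by
  obtain ⟨j', hj', hne⟩ := hc'.exists_apply_ne_zero hm' hk'
  obtain ⟨rfl, hroot⟩ := hc.eq_one_and_isRootOn hm (hc'.dotProduct_self hj')
    (fun j hj => horth j hj j' hj') hk (by rwa [he])
  exact ⟨rfl, j', hj', hroot⟩

end Sharing

section Count

lemma exists_forall_sum_eq {a : ℕ → ι} {ℓ : ℕ} (ha : Set.InjOn a (range (ℓ + 1)))
    (hcard : Fintype.card ι = ℓ + 4) {c d : ι} (hcd : c ≠ d) (hac : ∀ k ≤ ℓ, a k ≠ c)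
    (had : ∀ k ≤ ℓ, a k ≠ d) :
    ∃ f : ι, ∀ g : ι → ℤ, ∑ x, g x = g c + g d + ∑ k ∈ range (ℓ + 1), g (a k) + g f := by
  have hd : d ∉ (range (ℓ + 1)).image a := by
    simp only [mem_image, mem_range, not_exists, not_and]
    exact fun k hk => had k (by omega)
  have hc : c ∉ insert d ((range (ℓ + 1)).image a) := by
    simp only [mem_insert, mem_image, mem_range, not_or, not_exists, not_and]
    exact ⟨hcd, fun k hk => hac k (by omega)⟩
  have hT : (insert c (insert d ((range (ℓ + 1)).image a)))ᶜ.card = 1 := by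
    rw [card_compl, card_insert_of_notMem hc, card_insert_of_notMem hd,
      card_image_of_injOn ha, card_range]
    omega
  obtain ⟨f, hf⟩ := card_eq_one.1 hT
  refine ⟨f, fun g => ?_⟩
  rw [← sum_add_sum_compl (insert c (insert d ((range (ℓ + 1)).image a))) g, hf, sum_singleton,
    sum_insert hc, sum_insert hd, sum_image ha]
  ring

lemma exists_eq_of_sum_mul_self {ℓ : ℕ} (hℓ : 1 ≤ ℓ) {η μ X Y : ℤ}
    (hx : ℓ * (η * η) + (η + 1) * (η + 1) + X * X = 2)
    (hxy : ℓ * (η * μ) + (η + 1) * μ + X * Y = -1) :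
    ∃ l : ℤ, ℓ * (μ * μ) + μ * μ + Y * Y = (ℓ + 1) * l ^ 2 + (l + 1) ^ 2 := by
  have hℓ' : (1 : ℤ) ≤ ℓ := by exact_mod_cast hℓ
  have h1 : η ≤ 0 := by nlinarith [mul_self_nonneg X, mul_self_nonneg η]
  have h2 : -1 ≤ η := by nlinarith [mul_self_nonneg X, mul_self_nonneg (η + 1)]
  interval_cases η
  · have hX1 : X ≤ 1 := by nlinarith
    have hX2 : -1 ≤ X := by nlinarith
    interval_cases X
    · have hl : (ℓ : ℤ) = 1 := by linarith
      have hY : Y = 1 - μ := by rw [hl] at hxy; linarith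
      exact ⟨-μ, by rw [hl, hY]; ring⟩
    · have hl : (ℓ : ℤ) = 2 := by linarith
      rw [hl] at hxy
      omega
    · have hl : (ℓ : ℤ) = 1 := by linarith
      have hY : Y = μ - 1 := by rw [hl] at hxy; linarith
      exact ⟨-μ, by rw [hl, hY]; ring⟩
  · exact ⟨μ, by linear_combination (-Y * Y) * hx + (X * Y - μ - 1) * hxy⟩

lemma IsStdChain.exists_dotProduct_self_eq {z : ℕ → ι → ℤ} {ℓ : ℕ} {a : ℕ → ι} {s : ℕ → ℤ}
    (hc : IsStdChain z ℓ a s) (hℓ : 1 ≤ ℓ) (hcard : Fintype.card ι = ℓ + 4) {c d : ι}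
    (hcd : c ≠ d) (hac : ∀ k ≤ ℓ, a k ≠ c) (had : ∀ k ≤ ℓ, a k ≠ d) {x y : ι → ℤ}
    (hx : x ⬝ᵥ x = 3) (hxcd : x c * x c + x d * x d = 1)
    (hxz : ∀ j < ℓ, x ⬝ᵥ z j = if j + 1 = ℓ then -1 else 0) (hyc : y c = 0) (hyd : y d = 0)
    (hyz : ∀ j < ℓ, y ⬝ᵥ z j = 0) (hxy : x ⬝ᵥ y = -1) :
    ∃ l : ℤ, y ⬝ᵥ y = (ℓ + 1) * l ^ 2 + (l + 1) ^ 2 := by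
  obtain ⟨f, hsum⟩ := exists_forall_sum_eq hc.injOn hcard hcd hac had
  obtain ⟨hη, hηℓ⟩ := hc.signed_eq_of_dotProduct_last hℓ hxz
  have hμ := hc.signed_eq_of_orthogonal le_rfl hyz
  set η := x (a 0) * s 0
  set μ := y (a 0) * s 0
  have hsum_chain : ∀ {v w : ι → ℤ} {A B : ℤ}, (∀ k < ℓ, (v (a k) * s k) * (w (a k) * s k) = A) →
      (v (a ℓ) * s ℓ) * (w (a ℓ) * s ℓ) = B →
      ∑ k ∈ range (ℓ + 1), v (a k) * w (a k) = ℓ * A + B := fun hA hB =>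
    sum_range_succ_eq_of_eq (fun k hk => by rw [hc.apply_mul_apply hk.le, hA k hk])
      (by rw [hc.apply_mul_apply le_rfl, hB])
  have hxx := hsum fun i => x i * x i
  have hyy := hsum fun i => y i * y i
  have hxy' := hsum fun i => x i * y i
  rw [hsum_chain (fun k hk => by rw [hη k hk]) (by rw [hηℓ])] at hxx
  rw [hsum_chain (fun k hk => by rw [hμ k hk.le]) (by rw [hμ ℓ le_rfl])] at hyy
  rw [hsum_chain (fun k hk => by rw [hη k hk, hμ k hk.le]) (by rw [hηℓ, hμ ℓ le_rfl])] at hxy'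
  change x ⬝ᵥ x = _ at hxx
  change y ⬝ᵥ y = _ at hyy
  change x ⬝ᵥ y = _ at hxy'
  rw [hyc, hyd] at hyy hxy'
  obtain ⟨l, hl⟩ := exists_eq_of_sum_mul_self hℓ (η := η) (μ := μ) (X := x f) (Y := y f)
    (by linarith) (by linarith)
  exact ⟨l, by linarith⟩

end Count

lemma exists_third_of_ne :
    ∀ i i' : Fin 3, i ≠ i' → ∃ i'', i'' ≠ i ∧ i'' ≠ i' ∧ ∀ j ≠ i'', j = i ∨ j = i' := by
  decide

/-- `x`, `y` and `z i j` are the images of the central vertex, of the extra vertex and of the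
`j`-th vertex of the `i`-th arm, counted from the free end. -/
structure IsStarRealization (L : Fin 3 → ℕ) (z : Fin 3 → ℕ → ι → ℤ) (x y : ι → ℤ) : Prop where
  isChain : ∀ i, IsChain (z i) (L i)
  orthogonal : ∀ i i', i ≠ i' → ∀ j < L i, ∀ j' < L i', z i j ⬝ᵥ z i' j' = 0
  center_self : x ⬝ᵥ x = 3
  center_arm : ∀ i, ∀ j < L i, x ⬝ᵥ z i j = if j + 1 = L i then -1 else 0
  leaf_arm : ∀ i, ∀ j < L i, y ⬝ᵥ z i j = 0
  center_leaf : x ⬝ᵥ y = -1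

namespace IsStarRealization

variable {L : Fin 3 → ℕ} {z : Fin 3 → ℕ → ι → ℤ} {x y : ι → ℤ}
  {A : Fin 3 → ℕ → ι} {S : Fin 3 → ℕ → ℤ}

lemma exists_isRootOn (H : IsStarRealization L z x y) (hL : ∀ i, 1 ≤ L i)
    (hstd : ∀ i, IsStdChain (z i) (L i) (A i) (S i)) (hcard : Fintype.card ι = ∑ i, L i + 2) :
    ∃ i i', i ≠ i' ∧ L i = 1 ∧ L i' = 1 ∧ IsRootOn (A i 0) (A i 1) (z i' 0) := by
  obtain ⟨i, i', hii', k, hk, k', hk', he⟩ := exists_ne_apply_eq_of_card_lt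
    (n := fun i => L i + 1) (fun i => (hstd i).injOn)
    (by
      simp only [sum_add_distrib, sum_const, card_univ, Fintype.card_fin, smul_eq_mul, mul_one]
      omega)
  have horth : ∀ i i', i ≠ i' → ∀ j < L i, ∀ j' < L i', z i' j' ⬝ᵥ z i j = 0 :=
    fun i i' h j hj j' hj' => H.orthogonal i' i h.symm j' hj' j hj
  obtain ⟨hi, j', hj', hroot⟩ := (hstd i).eq_one_of_share (hstd i') (hL i) (hL i')
    (horth i i' hii') (by omega) (by omega) he
  obtain ⟨hi', -⟩ := (hstd i').eq_one_of_share (hstd i) (hL i') (hL i)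
    (horth i' i hii'.symm) (by omega) (by omega) he.symm
  obtain rfl : j' = 0 := by omega
  exact ⟨i, i', hii', hi, hi', hroot⟩

lemma exists_eq (H : IsStarRealization L z x y) (hL : ∀ i, 1 ≤ L i)
    (hcard : Fintype.card ι = ∑ i, L i + 2) :
    ∃ i, (∀ i' ≠ i, L i' = 1) ∧ ∃ l : ℤ, y ⬝ᵥ y = (L i + 1) * l ^ 2 + (l + 1) ^ 2 := by
  choose A S hstd using fun i => (H.isChain i).exists_isStdChain (hL i) (H.center_arm i)
  obtain ⟨i, i', hii', hi, hi', hB⟩ := H.exists_isRootOn hL hstd hcard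
  have hA : IsRootOn (A i 0) (A i 1) (z i 0) := (hi ▸ hstd i).isRootOn
  have hAB : z i 0 ⬝ᵥ z i' 0 = 0 := H.orthogonal i i' hii' 0 (by omega) 0 (by omega)
  obtain ⟨i'', hi'', hi''', hcov⟩ := exists_third_of_ne i i' hii'
  have hL1 : ∀ j ≠ i'', L j = 1 := fun j hj => by rcases hcov j hj with rfl | rfl <;> assumption
  have hcard' : Fintype.card ι = L i'' + 4 := by
    rw [hcard, ← add_sum_erase _ _ (mem_univ i''),
      sum_congr rfl fun j hj => hL1 j (ne_of_mem_erase hj)]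
    simp
  have hdisj : ∀ k ≤ L i'', A i'' k ≠ A i 0 ∧ A i'' k ≠ A i 1 := fun k hk => by
    obtain ⟨j, hj, hne⟩ := (hstd i'').exists_apply_ne_zero (hL i'') hk
    have := hA.apply_eq_zero_of_orthogonal hB hAB (H.orthogonal i'' i hi'' j hj 0 (by omega))
      (H.orthogonal i'' i' hi''' j hj 0 (by omega))
    exact ⟨fun h => hne (h ▸ this.1), fun h => hne (h ▸ this.2)⟩
  have hx : x (A i 0) * x (A i 0) + x (A i 1) * x (A i 1) = 1 := by
    have := hA.two_mul_add_eq hB hAB x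
    rw [H.center_arm i 0 (by omega), H.center_arm i' 0 (by omega), if_pos (by omega),
      if_pos (by omega)] at this
    linarith
  obtain ⟨hy0, hy1⟩ := hA.apply_eq_zero_of_orthogonal hB hAB (H.leaf_arm i 0 (by omega))
    (H.leaf_arm i' 0 (by omega))
  exact ⟨i'', hL1, (hstd i'').exists_dotProduct_self_eq (hL i'') hcard'
    ((hstd i).ne_succ (by omega)) (fun k hk => (hdisj k hk).1) (fun k hk => (hdisj k hk).2)
    H.center_self hx (H.center_arm i'') hy0 hy1 (H.leaf_arm i'') H.center_leaf⟩

end IsStarRealization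

variable {N : ℕ} {L : Fin 3 → ℕ}

def starArm (φ : ((Unit ⊕ ((Σ i : Fin 3, Fin (L i)) ⊕ Unit)) → ℤ) →ₗ[ℤ] (Fin N → ℤ))
    (i : Fin 3) (j : ℕ) : Fin N → ℤ :=
  if hj : j < L i then φ (Pi.single (Sum.inr (Sum.inl ⟨i, ⟨j, hj⟩⟩)) 1) else 0

lemma isStarRealization_of_isLatticeEmbedding {s : ℤ}
    {φ : ((Unit ⊕ ((Σ i : Fin 3, Fin (L i)) ⊕ Unit)) → ℤ) →ₗ[ℤ] (Fin N → ℤ)}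
    (hφ : IsLatticeEmbedding (starGram (-3) L fun _ : Unit => s) N φ) :
    IsStarRealization L (starArm φ) (φ (Pi.single (Sum.inl ()) 1))
      (φ (Pi.single (Sum.inr (Sum.inr ())) 1)) where
  isChain i := by
    refine ⟨fun j hj => ?_, fun j hj => ?_, fun j k hjk hk => ?_⟩
    · simp [starArm, hφ.dotProduct_single, starGram, hj]
    · simp [starArm, hφ.dotProduct_single, starGram, hj, show j < L i by omega]
    · simp [starArm, hφ.dotProduct_single, starGram, hk, show j < L i by omega,
        show j ≠ k by omega, show j + 1 ≠ k by omega, show k + 1 ≠ j by omega]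
  orthogonal i i' h j hj j' hj' := by simp [starArm, hφ.dotProduct_single, starGram, *]
  center_self := by simp [hφ.dotProduct_single, starGram]
  center_arm i j hj := by
    simp only [starArm, hφ.dotProduct_single, dif_pos hj, starGram]
    split_ifs <;> rfl
  leaf_arm i j hj := by simp [starArm, hφ.dotProduct_single, starGram, *]
  center_leaf := by simp [hφ.dotProduct_single, starGram]

lemma dotProduct_self_leaf {s : ℤ}
    {φ : ((Unit ⊕ ((Σ i : Fin 3, Fin (L i)) ⊕ Unit)) → ℤ) →ₗ[ℤ] (Fin N → ℤ)}
    (hφ : IsLatticeEmbedding (starGram (-3) L fun _ : Unit => s) N φ) :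
    φ (Pi.single (Sum.inr (Sum.inr ())) 1) ⬝ᵥ φ (Pi.single (Sum.inr (Sum.inr ())) 1) = -s := by
  simp [hφ.dotProduct_single, starGram]

end StarLattice

theorem stmt_16_general (p q r : ℕ) (hp : 2 ≤ p) (hq : 2 ≤ q) (hr : 2 ≤ r)
    (s : ℤ) (N : ℕ) (hN : N = p + q + r - 1)
    (h : ∃ φ : ((Unit ⊕ ((Σ i : Fin 3, Fin (![p - 1, q - 1, r - 1] i)) ⊕ Unit)) → ℤ) →ₗ[ℤ]
        (Fin N → ℤ),
      IsLatticeEmbedding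
        (starGram (-3) ![p - 1, q - 1, r - 1] (fun _ : Unit => s)) N φ) :
    ∃ l : ℤ,
      (p = 2 ∧ q = 2 ∧ s = -(r : ℤ) * l ^ 2 - (l + 1) ^ 2) ∨
      (p = 2 ∧ r = 2 ∧ s = -(q : ℤ) * l ^ 2 - (l + 1) ^ 2) ∨
      (q = 2 ∧ r = 2 ∧ s = -(p : ℤ) * l ^ 2 - (l + 1) ^ 2) := by
  obtain ⟨φ, hφ⟩ := h
  have hL : ∀ i : Fin 3, 1 ≤ ![p - 1, q - 1, r - 1] i := by
    intro i
    fin_cases i <;> simp only [Fin.zero_eta, Fin.mk_one, Fin.reduceFinMk, Fin.isValue,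
      Matrix.cons_val_zero, Matrix.cons_val_one, Matrix.cons_val] <;> omega
  obtain ⟨i, hi, l, hl⟩ := (StarLattice.isStarRealization_of_isLatticeEmbedding hφ).exists_eq hL
    (by simp only [Fintype.card_fin, Fin.sum_univ_three, Fin.isValue, Matrix.cons_val_zero,
      Matrix.cons_val_one, Matrix.cons_val]; omega)
  rw [StarLattice.dotProduct_self_leaf hφ] at hl
  have hcast : ∀ n : ℕ, 2 ≤ n → ((n - 1 : ℕ) : ℤ) + 1 = n := fun n hn => by omega
  refine ⟨l, ?_⟩
  fin_cases i <;> simp only [Fin.zero_eta, Fin.mk_one, Fin.reduceFinMk, Fin.isValue,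
      Matrix.cons_val_zero, Matrix.cons_val_one, Matrix.cons_val] at hl
  · rw [hcast p hp] at hl
    exact Or.inr (Or.inr ⟨by simpa using hi 1 (by decide), by simpa using hi 2 (by decide),
      by linarith⟩)
  · rw [hcast q hq] at hl
    exact Or.inr (Or.inl ⟨by simpa using hi 0 (by decide), by simpa using hi 2 (by decide),
      by linarith⟩)
  · rw [hcast r hr] at hl
    exact Or.inl ⟨by simpa using hi 0 (by decide), by simpa using hi 1 (by decide), by linarith⟩

/-- If the plumbing `X(p, q, r, s)` with `p, q, r ≥ 2` and `s ≤ −1` admits a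
lattice embedding into `ℤ^(p+q+r−1)`, then two of `p, q, r` are equal to 2 and,
with `u` the remaining one, `s = −uλ² − (λ+1)²` for some integer `λ`. -/
theorem stmt_16 (p q r : ℕ) (hp : 2 ≤ p) (hq : 2 ≤ q) (hr : 2 ≤ r)
    (s : ℤ) (hs : s ≤ -1) (N : ℕ) (hN : N = p + q + r - 1)
    (h : ∃ φ : ((Unit ⊕ ((Σ i : Fin 3, Fin (![p - 1, q - 1, r - 1] i)) ⊕ Unit)) → ℤ) →ₗ[ℤ]
        (Fin N → ℤ),
      IsLatticeEmbedding
        (starGram (-3) ![p - 1, q - 1, r - 1] (fun _ : Unit => s)) N φ) :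
    ∃ l : ℤ,
      (p = 2 ∧ q = 2 ∧ s = -(r : ℤ) * l ^ 2 - (l + 1) ^ 2) ∨
      (p = 2 ∧ r = 2 ∧ s = -(q : ℤ) * l ^ 2 - (l + 1) ^ 2) ∨
      (q = 2 ∧ r = 2 ∧ s = -(p : ℤ) * l ^ 2 - (l + 1) ^ 2) :=
  stmt_16_general p q r hp hq hr s N hN h
end

section
/- Let p ≥ 2 and q, r ≤ −2 be integers, and let N = p + 2. Let Q be the Gram matrix of the star-shaped plumbing graph consisting of a central vertex of weight −1, one chain of p − 1 vertices of weight −2 attached to the central vertex, and two additional vertices of weights q and r, each adjacent to the central vertex. If Q admits a lattice embedding into ℤ^N, then there exist integers x_1, x_2, y_1, y_2 such that q = −p − x_1² − x_2², r = −p − y_1² − y_2², and x_1 y_1 + x_2 y_2 = −p. -/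
def dotZ {N : ℕ} (u v : Fin N → ℤ) : ℤ := ∑ m, u m * v m

lemma dotZ_comm {N : ℕ} (u v : Fin N → ℤ) : dotZ u v = dotZ v u := by
  simp [dotZ, mul_comm]

lemma unit_vec {N : ℕ} (u : Fin N → ℤ) (h : ∑ m, u m * u m = 1) :
    ∃ m0, (u m0 = 1 ∨ u m0 = -1) ∧ ∀ m, m ≠ m0 → u m = 0 := by
  have hex : ∃ m0, u m0 ≠ 0 := by
    by_contra hc
    push_neg at hc
    simp [hc] at h
  obtain ⟨m0, hm0⟩ := hex
  have h1 : 1 ≤ u m0 * u m0 := mul_self_pos.mpr hm0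
  have hsplit : u m0 * u m0 + ∑ m ∈ Finset.univ.erase m0, u m * u m = 1 := by
    rw [← h, Finset.add_sum_erase _ (fun m => u m * u m) (Finset.mem_univ m0)]
  have hnn : ∀ m ∈ Finset.univ.erase m0, 0 ≤ u m * u m := fun m _ => mul_self_nonneg _
  have hge : 0 ≤ ∑ m ∈ Finset.univ.erase m0, u m * u m := Finset.sum_nonneg hnn
  have hz : ∑ m ∈ Finset.univ.erase m0, u m * u m = 0 := le_antisymm (by linarith) hge
  have hall := (Finset.sum_eq_zero_iff_of_nonneg hnn).mp hz
  refine ⟨m0, mul_self_eq_one_iff.mp (by linarith), fun m hm => ?_⟩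
  exact mul_self_eq_zero.mp (hall m (Finset.mem_erase.mpr ⟨hm, Finset.mem_univ m⟩))

lemma key (p N : ℕ) (hp : 2 ≤ p) (hN : N = p + 2) (q r : ℤ)
    (c A B : Fin N → ℤ) (v : ℕ → Fin N → ℤ)
    (hcc : dotZ c c = 1)
    (hcv : ∀ j, j < p - 1 → dotZ c (v j) = if j + 1 = p - 1 then -1 else 0)
    (hvv : ∀ j, j < p - 1 → ∀ j', j' < p - 1 → dotZ (v j) (v j') =
      if j = j' then 2 else if j + 1 = j' ∨ j' + 1 = j then -1 else 0)
    (hcA : dotZ A c = -1) (hcB : dotZ B c = -1)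
    (hvA : ∀ j, j < p - 1 → dotZ A (v j) = 0) (hvB : ∀ j, j < p - 1 → dotZ B (v j) = 0)
    (hAA : dotZ A A = -q) (hBB : dotZ B B = -r) (hAB : dotZ A B = 0) :
    ∃ x1 x2 y1 y2 : ℤ,
      q = -(p : ℤ) - x1 ^ 2 - x2 ^ 2 ∧
      r = -(p : ℤ) - y1 ^ 2 - y2 ^ 2 ∧
      x1 * y1 + x2 * y2 = -(p : ℤ) := by
  obtain ⟨w, hw_def⟩ : ∃ w : ℕ → Fin N → ℤ,
      ∀ k m, w k m = c m + ∑ t ∈ Finset.range k, v (p - 2 - t) m :=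
    ⟨_, fun k m => rfl⟩
  -- expansion lemmas
  have expandR : ∀ (a : Fin N → ℤ) (k : ℕ),
      dotZ a (w k) = dotZ a c + ∑ t ∈ Finset.range k, dotZ a (v (p - 2 - t)) := by
    intro a k
    simp only [dotZ, hw_def, mul_add, Finset.mul_sum, Finset.sum_add_distrib]
    congr 1
    exact Finset.sum_comm
  have expandL : ∀ (z : Fin N → ℤ) (l : ℕ),
      dotZ (w l) z = dotZ c z + ∑ t ∈ Finset.range l, dotZ (v (p - 2 - t)) z := by
    intro z l
    simp only [dotZ, hw_def, add_mul, Finset.sum_mul, Finset.sum_add_distrib]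
    congr 1
    exact Finset.sum_comm
  -- Lemma A'
  have hwv : ∀ l k, l ≤ k → k ≤ p - 2 → dotZ (w l) (v (p - 2 - k)) =
      if l = k then -1 else 0 := by
    intro l k hlk hk
    rw [expandL, hcv _ (by omega)]
    rcases Nat.eq_zero_or_pos k with hk0 | hk1
    · have hl0 : l = 0 := by omega
      subst hk0; subst hl0
      rw [if_pos (by omega : p - 2 - 0 + 1 = p - 1)]
      simp
    · rw [if_neg (by omega : ¬(p - 2 - k + 1 = p - 1))]
      have hcg : ∀ t ∈ Finset.range l, dotZ (v (p - 2 - t)) (v (p - 2 - k)) =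
          if t = k - 1 then (-1 : ℤ) else 0 := by
        intro t ht
        simp only [Finset.mem_range] at ht
        rw [hvv _ (by omega) _ (by omega)]
        split_ifs <;> omega
      rw [Finset.sum_congr rfl hcg, Finset.sum_ite_eq' (Finset.range l) (k - 1) (fun _ => (-1 : ℤ))]
      simp only [Finset.mem_range]
      split_ifs <;> omega
  -- orthonormality
  have hw : ∀ k, k ≤ p - 1 → ∀ l, l ≤ k → dotZ (w l) (w k) = if l = k then 1 else 0 := by
    intro k
    induction k with
    | zero =>
      intro _ l hl
      have hl0 : l = 0 := by omega
      subst hl0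
      have h00 : w 0 = c := funext fun m => by simp [hw_def]
      rw [h00]
      simpa using hcc
    | succ k ih =>
      intro hk1 l hl
      have hk2 : k ≤ p - 2 := by omega
      have hstep : ∀ a : Fin N → ℤ, dotZ a (w (k + 1)) = dotZ a (w k) + dotZ a (v (p - 2 - k)) := by
        intro a
        rw [expandR, expandR, Finset.sum_range_succ]
        ring
      rcases Nat.lt_or_ge l (k + 1) with hlk | hlk
      · have hl' : l ≤ k := by omega
        rw [hstep (w l), ih (by omega) l hl', hwv l k hl' hk2]
        split_ifs <;> omega
      · have hle : l = k + 1 := by omega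
        subst hle
        rw [hstep]
        have e1 : dotZ (w (k + 1)) (w k) = 0 := by
          rw [dotZ_comm, hstep, ih (by omega) k le_rfl, hwv k k le_rfl hk2]
          simp
        have e2 : dotZ (w (k + 1)) (v (p - 2 - k)) = 1 := by
          rw [dotZ_comm, hstep, dotZ_comm (v (p - 2 - k)) (w k), hwv k k le_rfl hk2,
            hvv _ (by omega) _ (by omega)]
          simp
        rw [e1, e2]
        simp
  -- orthogonality symmetric
  have horth : ∀ k l : Fin p, k ≠ l → dotZ (w ↑k) (w ↑l) = 0 := by
    intro k l hne
    rcases lt_trichotomy (k : ℕ) (l : ℕ) with hlt | heq | hgt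
    · rw [hw l (by omega) k (by omega), if_neg (by omega)]
    · exact absurd (Fin.ext heq) hne
    · rw [dotZ_comm, hw k (by omega) l (by omega), if_neg (by omega)]
  -- unit vectors
  have hunit : ∀ k : Fin p, ∃ m0, (w ↑k m0 = 1 ∨ w ↑k m0 = -1) ∧ ∀ m, m ≠ m0 → w ↑k m = 0 := by
    intro k
    apply unit_vec
    have := hw k (by omega) k le_rfl
    simpa [dotZ] using this
  choose σ hσ1 hσ2 using hunit
  have hdot_single : ∀ (a : Fin N → ℤ) (k : Fin p), dotZ a (w ↑k) = a (σ k) * w ↑k (σ k) := by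
    intro a k
    refine Finset.sum_eq_single (σ k) (fun m _ hm => ?_) (fun hmem => absurd (Finset.mem_univ _) hmem)
    rw [hσ2 k m hm, mul_zero]
  have hσinj : Function.Injective σ := by
    intro k l hkl
    by_contra hne
    have h0 := horth k l hne
    rw [hdot_single (w ↑k) l] at h0
    have h2 := hσ1 l
    rw [← hkl] at h0 h2
    rcases hσ1 k with h1 | h1 <;> rcases h2 with h2 | h2 <;> rw [h1, h2] at h0 <;> norm_num at h0
  have hAw : ∀ (a : Fin N → ℤ), dotZ a c = -1 → (∀ j, j < p - 1 → dotZ a (v j) = 0) →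
      ∀ k : Fin p, a (σ k) * w ↑k (σ k) = -1 := by
    intro a hac hav k
    have h1 : dotZ a (w ↑k) = -1 := by
      rw [expandR, hac, Finset.sum_eq_zero (fun t ht => hav _ (by omega))]
      ring
    rwa [hdot_single] at h1
  have hsgn : ∀ k : Fin p, A (σ k) * A (σ k) = 1 ∧ A (σ k) * B (σ k) = 1 ∧
      B (σ k) * B (σ k) = 1 := by
    intro k
    have hA := hAw A hcA hvA k
    have hB := hAw B hcB hvB k
    rcases hσ1 k with h | h <;> rw [h] at hA hB
    · rw [mul_one] at hA hB
      rw [hA, hB]; norm_num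
    · have hA' : A (σ k) = 1 := by linarith
      have hB' : B (σ k) = 1 := by linarith
      rw [hA', hB']; norm_num
  -- the two leftover coordinates
  have hcard : (Finset.univ \ Finset.image σ Finset.univ : Finset (Fin N)).card = 2 := by
    rw [Finset.card_sdiff_of_subset (Finset.subset_univ _),
      Finset.card_image_of_injective _ hσinj, Finset.card_univ, Finset.card_univ,
      Fintype.card_fin, Fintype.card_fin]
    omega
  obtain ⟨m1, m2, hm12, hT⟩ := Finset.card_eq_two.mp hcard
  have hsplit : ∀ f : Fin N → ℤ, ∑ m, f m = (∑ k : Fin p, f (σ k)) + (f m1 + f m2) := by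
    intro f
    rw [← Finset.sum_sdiff (Finset.subset_univ (Finset.image σ Finset.univ)), hT,
      Finset.sum_pair hm12, Finset.sum_image (fun a _ b _ hab => hσinj hab)]
    ring
  have hsA : ∑ k : Fin p, A (σ k) * A (σ k) = (p : ℤ) := by
    rw [Finset.sum_congr rfl (fun k _ => (hsgn k).1)]; simp
  have hsB : ∑ k : Fin p, B (σ k) * B (σ k) = (p : ℤ) := by
    rw [Finset.sum_congr rfl (fun k _ => (hsgn k).2.2)]; simp
  have hsAB : ∑ k : Fin p, A (σ k) * B (σ k) = (p : ℤ) := by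
    rw [Finset.sum_congr rfl (fun k _ => (hsgn k).2.1)]; simp
  have eA : ∑ m, A m * A m = ∑ k : Fin p, A (σ k) * A (σ k) + (A m1 * A m1 + A m2 * A m2) := by
    simpa using hsplit (fun m => A m * A m)
  have eB : ∑ m, B m * B m = ∑ k : Fin p, B (σ k) * B (σ k) + (B m1 * B m1 + B m2 * B m2) := by
    simpa using hsplit (fun m => B m * B m)
  have eAB : ∑ m, A m * B m = ∑ k : Fin p, A (σ k) * B (σ k) + (A m1 * B m1 + A m2 * B m2) := by
    simpa using hsplit (fun m => A m * B m)
  have hAA' : ∑ m, A m * A m = -q := hAA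
  have hBB' : ∑ m, B m * B m = -r := hBB
  have hAB' : ∑ m, A m * B m = 0 := hAB
  refine ⟨A m1, A m2, B m1, B m2, ?_, ?_, ?_⟩
  · rw [pow_two, pow_two]; linarith
  · rw [pow_two, pow_two]; linarith
  · linarith

lemma dot_single_single {V : Type} [Fintype V] [DecidableEq V] (Q : Matrix V V ℤ) (u v : V) :
    ∑ a, ∑ b, (Pi.single u 1 : V → ℤ) a * Q a b * (Pi.single v 1 : V → ℤ) b = Q u v := by
  simp [Pi.single_apply, ite_mul, mul_ite, Finset.sum_ite_eq, Finset.sum_ite_eq']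


/-- If the plumbing `X(p, q, r)` with `p ≥ 2` and `q, r ≤ −2` (central vertex
of weight `−1`, one chain of length `p−1`, and two vertices of weights `q` and
`r`) admits a lattice embedding into `ℤ^(p+2)`, then `q = −p − x₁² − x₂²`,
`r = −p − y₁² − y₂²`, and `x₁y₁ + x₂y₂ = −p` for some integers. -/
theorem stmt_18 (p : ℕ) (hp : 2 ≤ p) (q r : ℤ) (hq : q ≤ -2) (hr : r ≤ -2)
    (N : ℕ) (hN : N = p + 2)
    (h : ∃ φ : ((Unit ⊕ ((Σ _ : Unit, Fin (p - 1)) ⊕ Fin 2)) → ℤ) →ₗ[ℤ]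
        (Fin N → ℤ),
      IsLatticeEmbedding (starGram (-1) (fun _ : Unit => p - 1) ![q, r]) N φ) :
    ∃ x1 x2 y1 y2 : ℤ,
      q = -(p : ℤ) - x1 ^ 2 - x2 ^ 2 ∧
      r = -(p : ℤ) - y1 ^ 2 - y2 ^ 2 ∧
      x1 * y1 + x2 * y2 = -(p : ℤ) := by
  obtain ⟨φ, hφ⟩ := h
  set Q := starGram (-1) (fun _ : Unit => p - 1) ![q, r] with hQ
  have gram : ∀ u v, (∑ m, φ (Pi.single u 1) m * φ (Pi.single v 1) m) = -(Q u v) :=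
    fun u v => (hφ (Pi.single u 1) (Pi.single v 1)).trans
      (congrArg Neg.neg (dot_single_single Q u v))
  refine key p N hp hN q r
    (φ (Pi.single (Sum.inl ()) 1))
    (φ (Pi.single (Sum.inr (Sum.inr 0)) 1))
    (φ (Pi.single (Sum.inr (Sum.inr 1)) 1))
    (fun j => if hj : j < p - 1 then φ (Pi.single (Sum.inr (Sum.inl ⟨(), ⟨j, hj⟩⟩)) 1) else 0)
    ?_ ?_ ?_ ?_ ?_ ?_ ?_ ?_ ?_ ?_
  · have := gram (Sum.inl ()) (Sum.inl ())
    have hq0 : Q (Sum.inl ()) (Sum.inl ()) = -1 := rfl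
    rw [hq0] at this
    simpa [dotZ] using this
  · intro j hj
    simp only [dif_pos hj]
    have := gram (Sum.inl ()) (Sum.inr (Sum.inl ⟨(), ⟨j, hj⟩⟩))
    have hq0 : Q (Sum.inl ()) (Sum.inr (Sum.inl ⟨(), ⟨j, hj⟩⟩)) =
        if j + 1 = p - 1 then 1 else 0 := rfl
    rw [hq0] at this
    show dotZ _ _ = _
    rw [show dotZ (φ (Pi.single (Sum.inl ()) 1)) (φ (Pi.single (Sum.inr (Sum.inl ⟨(), ⟨j, hj⟩⟩)) 1)) =
      ∑ m, φ (Pi.single (Sum.inl ()) 1) m * φ (Pi.single (Sum.inr (Sum.inl ⟨(), ⟨j, hj⟩⟩)) 1) m from rfl, this]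
    split_ifs <;> norm_num
  · intro j hj j' hj'
    simp only [dif_pos hj, dif_pos hj']
    have := gram (Sum.inr (Sum.inl ⟨(), ⟨j, hj⟩⟩)) (Sum.inr (Sum.inl ⟨(), ⟨j', hj'⟩⟩))
    have hq0 : Q (Sum.inr (Sum.inl ⟨(), ⟨j, hj⟩⟩)) (Sum.inr (Sum.inl ⟨(), ⟨j', hj'⟩⟩)) =
        if j = j' then -2 else if j + 1 = j' ∨ j' + 1 = j then 1 else 0 := by
      rw [hQ]
      show (if () = () then (if j = j' then (-2:ℤ) else if j + 1 = j' ∨ j' + 1 = j then 1 else 0) else 0) = _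
      rw [if_pos rfl]
    rw [hq0] at this
    show dotZ _ _ = _
    rw [show dotZ (φ (Pi.single (Sum.inr (Sum.inl ⟨(), ⟨j, hj⟩⟩)) 1)) (φ (Pi.single (Sum.inr (Sum.inl ⟨(), ⟨j', hj'⟩⟩)) 1)) =
      ∑ m, φ (Pi.single (Sum.inr (Sum.inl ⟨(), ⟨j, hj⟩⟩)) 1) m * φ (Pi.single (Sum.inr (Sum.inl ⟨(), ⟨j', hj'⟩⟩)) 1) m from rfl, this]
    split_ifs <;> norm_num
  · have := gram (Sum.inr (Sum.inr 0)) (Sum.inl ())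
    have hq0 : Q (Sum.inr (Sum.inr 0)) (Sum.inl ()) = 1 := rfl
    rw [hq0] at this
    simpa [dotZ] using this
  · have := gram (Sum.inr (Sum.inr 1)) (Sum.inl ())
    have hq0 : Q (Sum.inr (Sum.inr 1)) (Sum.inl ()) = 1 := rfl
    rw [hq0] at this
    simpa [dotZ] using this
  · intro j hj
    simp only [dif_pos hj]
    have := gram (Sum.inr (Sum.inr 0)) (Sum.inr (Sum.inl ⟨(), ⟨j, hj⟩⟩))
    have hq0 : Q (Sum.inr (Sum.inr 0)) (Sum.inr (Sum.inl ⟨(), ⟨j, hj⟩⟩)) = 0 := rfl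
    rw [hq0] at this
    simpa [dotZ] using this
  · intro j hj
    simp only [dif_pos hj]
    have := gram (Sum.inr (Sum.inr 1)) (Sum.inr (Sum.inl ⟨(), ⟨j, hj⟩⟩))
    have hq0 : Q (Sum.inr (Sum.inr 1)) (Sum.inr (Sum.inl ⟨(), ⟨j, hj⟩⟩)) = 0 := rfl
    rw [hq0] at this
    simpa [dotZ] using this
  · have := gram (Sum.inr (Sum.inr 0)) (Sum.inr (Sum.inr 0))
    have hq0 : Q (Sum.inr (Sum.inr 0)) (Sum.inr (Sum.inr 0)) = q := by
      rw [hQ]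
      show (if (0 : Fin 2) = 0 then ![q, r] 0 else 0) = q
      simp
    rw [hq0] at this
    simpa [dotZ] using this
  · have := gram (Sum.inr (Sum.inr 1)) (Sum.inr (Sum.inr 1))
    have hq0 : Q (Sum.inr (Sum.inr 1)) (Sum.inr (Sum.inr 1)) = r := by
      rw [hQ]
      show (if (1 : Fin 2) = 1 then ![q, r] 1 else 0) = r
      simp
    rw [hq0] at this
    simpa [dotZ] using this
  · have := gram (Sum.inr (Sum.inr 0)) (Sum.inr (Sum.inr 1))
    have hq0 : Q (Sum.inr (Sum.inr 0)) (Sum.inr (Sum.inr 1)) = 0 := by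
      rw [hQ]
      show (if (0 : Fin 2) = 1 then ![q, r] 0 else 0) = 0
      simp
    rw [hq0] at this
    simpa [dotZ] using this
end

section
/- Let p ≥ 1 and q, r, s ≤ −1 be integers, and let N = p + 3. Let Q be the Gram matrix of the star-shaped plumbing graph consisting of a central vertex of weight −1, one chain of p − 1 vertices of weight −2 attached to the central vertex, and three additional vertices of weights q, r, and s, each adjacent to the central vertex. If Q admits a lattice embedding into ℤ^N, then there exist integers x_1, x_2, x_3, y_1, y_2, y_3, z_1, z_2, z_3 such that q = −p − x_1² − x_2² − x_3², r = −p − y_1² − y_2² − y_3², s = −p − z_1² − z_2² − z_3², and x_1y_1 + x_2y_2 + x_3y_3 = x_1z_1 + x_2z_2 + x_3z_3 = y_1z_1 + y_2z_2 + y_3z_3 = −p. -/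
open Finset

theorem exists_eq_single_of_dotProduct_self_eq_one {ι : Type*} [Fintype ι] [DecidableEq ι]
    {u : ι → ℤ} (h : u ⬝ᵥ u = 1) : ∃ m : ι, ∃ ε : ℤ, ε * ε = 1 ∧ u = Pi.single m ε := by
  obtain ⟨m, hm⟩ : ∃ m, u m ≠ 0 := by
    by_contra! h0
    simp [dotProduct, h0] at h
  have hsplit : u m * u m + ∑ n ∈ univ.erase m, u n * u n = 1 := by
    rw [add_sum_erase _ (fun n => u n * u n) (mem_univ m)]; exact h
  have hrest : 0 ≤ ∑ n ∈ univ.erase m, u n * u n := sum_nonneg fun n _ => mul_self_nonneg _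
  have hm_pos : 0 < u m * u m := mul_self_pos.mpr hm
  have hrest_zero : ∑ n ∈ univ.erase m, u n * u n = 0 := by linarith
  refine ⟨m, u m, by linarith, funext fun n => ?_⟩
  by_cases hn : n = m
  · subst hn; simp
  · rw [Pi.single_eq_of_ne hn]
    exact mul_self_eq_zero.mp <| (sum_eq_zero_iff_of_nonneg fun n _ => mul_self_nonneg (u n)).mp
      hrest_zero n (mem_erase.mpr ⟨hn, mem_univ n⟩)

theorem exists_finset_dotProduct_eq_of_orthonormal {ι κ : Type*} [Fintype ι] [DecidableEq ι]
    [Fintype κ] [DecidableEq κ] (u : κ → ι → ℤ)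
    (hu : ∀ k l, u k ⬝ᵥ u l = if k = l then 1 else 0) :
    ∃ T : Finset ι, T.card = Fintype.card ι - Fintype.card κ ∧
      ∀ a b : ι → ℤ, a ⬝ᵥ b = ∑ k, (a ⬝ᵥ u k) * (b ⬝ᵥ u k) + ∑ m ∈ T, a m * b m := by
  choose pos ε hε hu_eq using fun k =>
    exists_eq_single_of_dotProduct_self_eq_one (by simpa using hu k k)
  have hpos : Function.Injective pos := by
    intro k l hkl
    by_contra hne
    have hkl' := hu k l
    rw [hu_eq k, hu_eq l, hkl, single_dotProduct, Pi.single_eq_same, if_neg hne] at hkl'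
    rcases mul_eq_zero.mp hkl' with h0 | h0
    · simpa [h0] using hε k
    · simpa [h0] using hε l
  refine ⟨univ \ univ.image pos, ?_, fun a b => ?_⟩
  · rw [card_sdiff_of_subset (subset_univ _), card_image_of_injective _ hpos, card_univ,
      card_univ]
  · have hS : ∑ m ∈ univ.image pos, a m * b m = ∑ k, (a ⬝ᵥ u k) * (b ⬝ᵥ u k) := by
      rw [sum_image fun k _ l _ h => hpos h]
      refine sum_congr rfl fun k _ => ?_
      rw [hu_eq k, dotProduct_single, dotProduct_single]
      linear_combination -(a (pos k) * b (pos k)) * hε k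
    rw [← hS, add_comm, sum_sdiff (subset_univ _)]
    rfl

theorem exists_orthonormal_of_chain {R ι : Type*} [CommRing R] [Fintype ι] (ℓ : ℕ)
    (e : ι → R) (v : Fin ℓ → ι → R) (he : e ⬝ᵥ e = 1)
    (hev : ∀ j : Fin ℓ, e ⬝ᵥ v j = if (j : ℕ) + 1 = ℓ then -1 else 0)
    (hvv : ∀ j j' : Fin ℓ, v j ⬝ᵥ v j' =
      if (j : ℕ) = j' then 2 else if (j : ℕ) + 1 = j' ∨ (j' : ℕ) + 1 = j then -1 else 0) :
    ∃ u : Fin (ℓ + 1) → ι → R, (∀ k l, u k ⬝ᵥ u l = if k = l then 1 else 0) ∧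
      ∀ k, ∃ c : Fin ℓ → R, u k = e + ∑ j, c j • v j := by
  induction ℓ generalizing e with
  | zero =>
    refine ⟨fun _ => e, fun k l => ?_, fun _ => ⟨0, by simp⟩⟩
    obtain rfl : k = l := Fin.ext (by omega)
    simp [he]
  | succ ℓ ih =>
    have hel : e ⬝ᵥ v (Fin.last ℓ) = -1 := by simp [hev]
    have hll : v (Fin.last ℓ) ⬝ᵥ v (Fin.last ℓ) = 2 := by simp [hvv]
    have hev' : ∀ j : Fin ℓ, e ⬝ᵥ v j.castSucc = 0 := fun j => by
      simp [hev, j.isLt.ne]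
    set e' := e + v (Fin.last ℓ)
    have he' : e' ⬝ᵥ e' = 1 := by
      simp only [e', add_dotProduct, dotProduct_add, dotProduct_comm (v _) e, hel, hll, he]
      ring
    have hee' : e ⬝ᵥ e' = 0 := by
      simp only [e', dotProduct_add, hel, he]
      ring
    have he'v : ∀ j : Fin ℓ, e' ⬝ᵥ v j.castSucc = if (j : ℕ) + 1 = ℓ then -1 else 0 := by
      intro j
      simp only [e', add_dotProduct, hev' j, hvv, Fin.val_castSucc, Fin.val_last]
      split_ifs <;> first | omega | ring
    obtain ⟨u, hu, hu_span⟩ := ih e' (fun j => v j.castSucc) he' he'v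
      (fun j j' => by simpa using hvv j.castSucc j'.castSucc)
    have heu : ∀ k, e ⬝ᵥ u k = 0 := fun k => by
      obtain ⟨c, hc⟩ := hu_span k
      simp [hc, dotProduct_add, dotProduct_sum, dotProduct_smul, hee', hev']
    refine ⟨Fin.cons e u, fun k l => ?_, fun k => ?_⟩
    · cases k using Fin.cases <;> cases l using Fin.cases <;>
        simp [he, heu, hu, dotProduct_comm _ e, Fin.succ_ne_zero, (Fin.succ_ne_zero _).symm]
    · refine Fin.cases ⟨0, by simp⟩ (fun k => ?_) k
      obtain ⟨c, hc⟩ := hu_span k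
      refine ⟨Fin.snoc c 1, ?_⟩
      simp only [Fin.cons_succ, hc, e', Fin.sum_univ_castSucc, Fin.snoc_castSucc, Fin.snoc_last,
        one_smul]
      abel

theorem IsLatticeEmbedding.single_dotProduct_single {V : Type} [Fintype V] [DecidableEq V]
    {Q : Matrix V V ℤ} {N : ℕ} {φ : (V → ℤ) →ₗ[ℤ] (Fin N → ℤ)} (hφ : IsLatticeEmbedding Q N φ)
    (a b : V) : φ (Pi.single a 1) ⬝ᵥ φ (Pi.single b 1) = -Q a b := by
  refine (hφ _ _).trans ?_
  simp [Pi.single_apply, ite_mul, mul_ite]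

theorem exists_finset_of_isLatticeEmbedding_starGram {κ : Type} [Fintype κ] [DecidableEq κ]
    {ℓ N : ℕ} {w : κ → ℤ} {φ : ((Unit ⊕ ((Σ _ : Unit, Fin ℓ) ⊕ κ)) → ℤ) →ₗ[ℤ] (Fin N → ℤ)}
    (hφ : IsLatticeEmbedding (starGram (-1) (fun _ : Unit => ℓ) w) N φ) :
    ∃ T : Finset (Fin N), T.card = N - (ℓ + 1) ∧ ∀ a b : κ,
      (if a = b then -w a else 0) = (ℓ + 1 : ℤ) +
        ∑ m ∈ T, φ (Pi.single (.inr (.inr a)) 1) m * φ (Pi.single (.inr (.inr b)) 1) m := by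
  have hG := hφ.single_dotProduct_single
  obtain ⟨u, hu, hu_span⟩ := exists_orthonormal_of_chain ℓ (φ (Pi.single (.inl ()) 1))
    (fun j => φ (Pi.single (.inr (.inl ⟨(), j⟩)) 1)) (by simp [hG, starGram])
    (fun j => by rw [hG]; simp only [starGram]; split_ifs <;> simp)
    (fun j j' => by rw [hG]; simp only [starGram]; split_ifs <;> simp)
  have hAu : ∀ a k, φ (Pi.single (.inr (.inr a)) 1) ⬝ᵥ u k = -1 := fun a k => by
    obtain ⟨c, hc⟩ := hu_span k
    simp only [hc, dotProduct_add, dotProduct_sum, dotProduct_smul, hG]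
    simp [starGram]
  obtain ⟨T, hT, hdecomp⟩ := exists_finset_dotProduct_eq_of_orthonormal u hu
  refine ⟨T, by simpa using hT, fun a b => ?_⟩
  have hab := hdecomp (φ (Pi.single (.inr (.inr a)) 1)) (φ (Pi.single (.inr (.inr b)) 1))
  rw [hG] at hab
  simp only [hAu, starGram] at hab
  split_ifs at hab ⊢ <;> simp at hab <;> linarith

theorem stmt_19_general (p : ℕ) (hp : 1 ≤ p) (q r s : ℤ)
    (N : ℕ) (hN : N = p + 3)
    (h : ∃ φ : ((Unit ⊕ ((Σ _ : Unit, Fin (p - 1)) ⊕ Fin 3)) → ℤ) →ₗ[ℤ]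
        (Fin N → ℤ),
      IsLatticeEmbedding (starGram (-1) (fun _ : Unit => p - 1) ![q, r, s]) N φ) :
    ∃ x1 x2 x3 y1 y2 y3 z1 z2 z3 : ℤ,
      q = -(p : ℤ) - x1 ^ 2 - x2 ^ 2 - x3 ^ 2 ∧
      r = -(p : ℤ) - y1 ^ 2 - y2 ^ 2 - y3 ^ 2 ∧
      s = -(p : ℤ) - z1 ^ 2 - z2 ^ 2 - z3 ^ 2 ∧
      x1 * y1 + x2 * y2 + x3 * y3 = -(p : ℤ) ∧
      x1 * z1 + x2 * z2 + x3 * z3 = -(p : ℤ) ∧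
      y1 * z1 + y2 * z2 + y3 * z3 = -(p : ℤ) := by
  obtain ⟨φ, hφ⟩ := h
  obtain ⟨T, hT, hgram⟩ := exists_finset_of_isLatticeEmbedding_starGram hφ
  obtain ⟨m₁, m₂, m₃, h₁₂, h₁₃, h₂₃, rfl⟩ := card_eq_three.mp (hT.trans (by omega))
  set x := fun (a : Fin 3) (m : Fin N) => φ (Pi.single (.inr (.inr a)) 1) m
  have hx : ∀ a b : Fin 3, (if a = b then -![q, r, s] a else 0) =
      p + (x a m₁ * x b m₁ + x a m₂ * x b m₂ + x a m₃ * x b m₃) := fun a b => by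
    rw [hgram, sum_insert (by simp [h₁₂, h₁₃]), sum_insert (by simp [h₂₃]), sum_singleton,
      Nat.cast_sub hp]
    push_cast
    ring
  have hq := hx 0 0
  have hr := hx 1 1
  have hs := hx 2 2
  have hqr := hx 0 1
  have hqs := hx 0 2
  have hrs := hx 1 2
  simp only [Fin.reduceEq, if_true, if_false, Matrix.cons_val] at hq hr hs hqr hqs hrs
  exact ⟨x 0 m₁, x 0 m₂, x 0 m₃, x 1 m₁, x 1 m₂, x 1 m₃, x 2 m₁, x 2 m₂, x 2 m₃,
    by linear_combination -hq, by linear_combination -hr, by linear_combination -hs,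
    by linear_combination -hqr, by linear_combination -hqs, by linear_combination -hrs⟩

/-- If the plumbing `X(p, q, r, s)` with `p ≥ 1` and `q, r, s ≤ −1` (central
vertex of weight `−1`, one chain of length `p−1`, and three vertices of weights
`q`, `r`, `s`) admits a lattice embedding into `ℤ^(p+3)`, then
`q = −p − x₁² − x₂² − x₃²`, `r = −p − y₁² − y₂² − y₃²`,
`s = −p − z₁² − z₂² − z₃²`, and the pairwise dot products of `(x₁,x₂,x₃)`,
`(y₁,y₂,y₃)`, `(z₁,z₂,z₃)` all equal `−p`. -/
theorem stmt_19 (p : ℕ) (hp : 1 ≤ p) (q r s : ℤ)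
    (hq : q ≤ -1) (hr : r ≤ -1) (hs : s ≤ -1)
    (N : ℕ) (hN : N = p + 3)
    (h : ∃ φ : ((Unit ⊕ ((Σ _ : Unit, Fin (p - 1)) ⊕ Fin 3)) → ℤ) →ₗ[ℤ]
        (Fin N → ℤ),
      IsLatticeEmbedding (starGram (-1) (fun _ : Unit => p - 1) ![q, r, s]) N φ) :
    ∃ x1 x2 x3 y1 y2 y3 z1 z2 z3 : ℤ,
      q = -(p : ℤ) - x1 ^ 2 - x2 ^ 2 - x3 ^ 2 ∧
      r = -(p : ℤ) - y1 ^ 2 - y2 ^ 2 - y3 ^ 2 ∧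
      s = -(p : ℤ) - z1 ^ 2 - z2 ^ 2 - z3 ^ 2 ∧
      x1 * y1 + x2 * y2 + x3 * y3 = -(p : ℤ) ∧
      x1 * z1 + x2 * z2 + x3 * z3 = -(p : ℤ) ∧
      y1 * z1 + y2 * z2 + y3 * z3 = -(p : ℤ) :=
  stmt_19_general p hp q r s N hN h
end
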